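/- arXiv:1802.06331 — 4 statements merged into one kernel-verified Lean document; each statement's English description precedes it below -/
import Mathlib

section
/- Let φ : ℝⁿ \ {0} → (0,∞) be continuous with Φ(t,u) = ∫_t^∞ φ(ru) r^{n-1} dr finite and continuous in u for each t > 0. If a sequence of convex bodies K_i (each containing the origin in its interior) converges to such a convex body K in the Hausdorff metric, then 𝒱_φ(K_i) → 𝒱_φ(K), where 𝒱_φ(L) = ∫_{ℝⁿ \ L} φ(x) dx. -/
open MeasureTheory Metric Set Filter
open scoped ENNReal NNReal Topology Pointwise RealInnerProductSpace

noncomputable section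

/-- The spherical (surface) measure on the unit sphere of `ℝⁿ`. -/
def sphMeasure (n : ℕ) : Measure (sphere (0 : EuclideanSpace ℝ (Fin n)) 1) :=
  (volume : Measure (EuclideanSpace ℝ (Fin n))).toSphere

/-- The radial function of a set. -/
def radialFn {n : ℕ} (K : Set (EuclideanSpace ℝ (Fin n)))
    (u : sphere (0 : EuclideanSpace ℝ (Fin n)) 1) : ℝ :=
  sSup {r : ℝ | 0 < r ∧ r • (u : EuclideanSpace ℝ (Fin n)) ∈ K}

/-- The support function of a set. -/
def suppFn {n : ℕ} (K : Set (EuclideanSpace ℝ (Fin n))) (v : EuclideanSpace ℝ (Fin n)) : ℝ :=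
  sSup ((fun x => ⟪x, v⟫) '' K)

/-- The reverse radial Gauss image of `η ⊆ Sⁿ⁻¹`. -/
def revGauss {n : ℕ} (K : Set (EuclideanSpace ℝ (Fin n)))
    (η : Set (sphere (0 : EuclideanSpace ℝ (Fin n)) 1)) :
    Set (sphere (0 : EuclideanSpace ℝ (Fin n)) 1) :=
  {u | ∃ v ∈ η, ⟪radialFn K u • (u : EuclideanSpace ℝ (Fin n)),
      (v : EuclideanSpace ℝ (Fin n))⟫ = suppFn K (v : EuclideanSpace ℝ (Fin n))}

/-- The general dual Orlicz curvature measure, as a set function. -/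
def dualCurv {n : ℕ} (φ : EuclideanSpace ℝ (Fin n) → ℝ) (K : Set (EuclideanSpace ℝ (Fin n)))
    (η : Set (sphere (0 : EuclideanSpace ℝ (Fin n)) 1)) : ℝ≥0∞ :=
  ∫⁻ u in revGauss K η,
    ENNReal.ofReal (φ (radialFn K u • (u : EuclideanSpace ℝ (Fin n))) * radialFn K u ^ n)
    ∂(sphMeasure n)

section AuxGeom

variable {E : Type*} [NormedAddCommGroup E] [InnerProductSpace ℝ E]

lemma aux_scale_mono {L : Set E} (hL : Convex ℝ L) (h0 : (0:E) ∈ L) {s t : ℝ}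
    (hs : 0 ≤ s) (hst : s ≤ t) : s • L ⊆ t • L := by
  rcases eq_or_lt_of_le hst with rfl | hlt
  · exact subset_rfl
  have ht : 0 < t := lt_of_le_of_lt hs hlt
  rintro _ ⟨y, hy, rfl⟩
  refine ⟨(s / t) • y, hL.smul_mem_of_zero_mem h0 hy
    ⟨div_nonneg hs ht.le, (div_le_one ht).2 hst⟩, ?_⟩
  show t • ((s / t) • y) = s • y
  rw [smul_smul, mul_comm, div_mul_cancel₀ _ ht.ne']

lemma aux_dilate {L A : Set E} (hL : Convex ℝ L) {r ε : ℝ} (hr : 0 < r) (hε : 0 < ε)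
    (hball : ball (0:E) r ⊆ L) (hA : ∀ x ∈ A, ∃ y ∈ L, dist x y < ε) :
    A ⊆ (1 + ε / r) • L := by
  intro x hx
  obtain ⟨y, hy, hxy⟩ := hA x hx
  have hεr : 0 < ε / r := div_pos hε hr
  have ht : (0:ℝ) < 1 + ε / r := by linarith
  have hz : (r / ε) • (x - y) ∈ L := by
    apply hball
    rw [mem_ball_zero_iff, norm_smul, Real.norm_eq_abs, abs_of_pos (div_pos hr hε)]
    calc r / ε * ‖x - y‖ < r / ε * ε := by
          apply mul_lt_mul_of_pos_left _ (div_pos hr hε)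
          rwa [← dist_eq_norm]
      _ = r := div_mul_cancel₀ r hε.ne'
  have hcomb := hL hy hz (inv_nonneg.2 ht.le)
    (mul_nonneg hεr.le (inv_nonneg.2 ht.le)) (by field_simp)
  have heq : (1+ε/r)⁻¹ • y + ((ε/r) * (1+ε/r)⁻¹) • ((r/ε) • (x-y)) = (1+ε/r)⁻¹ • x := by
    rw [smul_smul]
    have hb : ε / r * (1 + ε / r)⁻¹ * (r / ε) = (1+ε/r)⁻¹ := by
      field_simp
    rw [hb, ← smul_add]
    congr 1
    abel
  rw [heq] at hcomb
  exact ⟨(1+ε/r)⁻¹ • x, hcomb, by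
    show (1 + ε / r) • ((1+ε/r)⁻¹ • x) = x
    rw [smul_smul, mul_inv_cancel₀ ht.ne', one_smul]⟩

lemma aux_ball_subset [CompleteSpace E] {C : Set E} (hC : Convex ℝ C) (hCc : IsClosed C)
    {r ε : ℝ} (hε : 0 < ε) (hεr : ε < r)
    (h : ∀ x ∈ ball (0:E) r, ∃ y ∈ C, dist x y < ε) : ball (0:E) (r - ε) ⊆ C := by
  intro z hz
  by_contra hzC
  obtain ⟨f, u, hfC, hfz⟩ := geometric_hahn_banach_closed_point hC hCc hzC
  obtain ⟨y0, hy0, -⟩ := h 0 (mem_ball_self (hε.trans hεr))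
  set v := (InnerProductSpace.toDual ℝ E).symm f with hv
  have hfv : ∀ w, f w = ⟪v, w⟫ := fun w => (InnerProductSpace.toDual_symm_apply).symm
  have hvne : v ≠ 0 := by
    intro h0
    have h1 : f y0 < f z := (hfC y0 hy0).trans hfz
    rw [hfv, hfv, h0, inner_zero_left, inner_zero_left] at h1
    exact lt_irrefl _ h1
  have hvpos : 0 < ‖v‖ := norm_pos_iff.2 hvne
  have hfzlt : f z < (r - ε) * ‖v‖ := by
    rw [hfv]
    calc ⟪v, z⟫ ≤ ‖v‖ * ‖z‖ := real_inner_le_norm v z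
      _ < ‖v‖ * (r - ε) := mul_lt_mul_of_pos_left (mem_ball_zero_iff.1 hz) hvpos
      _ = (r-ε) * ‖v‖ := mul_comm _ _
  set s : ℝ := max (f z / ‖v‖ + ε) 0 with hs
  have hsr : s < r := by
    apply max_lt _ (by linarith)
    rw [← lt_sub_iff_add_lt, div_lt_iff₀ hvpos]
    linarith
  have hsnn : 0 ≤ s := le_max_right _ _
  set p : E := s • ‖v‖⁻¹ • v with hp
  have hpmem : p ∈ ball (0:E) r := by
    rw [mem_ball_zero_iff, hp, norm_smul, norm_smul, norm_inv, norm_norm,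
      inv_mul_cancel₀ hvpos.ne', mul_one, Real.norm_eq_abs, abs_of_nonneg hsnn]
    exact hsr
  obtain ⟨y, hyC, hdy⟩ := h p hpmem
  have h1 : f p = s * ‖v‖ := by
    rw [hfv, hp, real_inner_smul_right, real_inner_smul_right,
      real_inner_self_eq_norm_mul_norm]
    field_simp
  have h2 : f p - f y < ε * ‖v‖ := by
    have heq : f p - f y = ⟪v, p - y⟫ := by rw [hfv, hfv, inner_sub_right]
    rw [heq]
    calc ⟪v, p - y⟫ ≤ ‖v‖ * ‖p - y‖ := real_inner_le_norm _ _
      _ < ‖v‖ * ε := mul_lt_mul_of_pos_left (by rwa [← dist_eq_norm]) hvpos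
      _ = ε * ‖v‖ := mul_comm _ _
  have h3 : f y < u := hfC y hyC
  have h4 : (s - ε) * ‖v‖ < u := by rw [sub_mul]; linarith
  have h5 : f z ≤ (s - ε) * ‖v‖ := by
    have hle : f z / ‖v‖ + ε ≤ s := le_max_left _ _
    rw [← div_le_iff₀ hvpos]
    linarith
  linarith [hfz]

end AuxGeom

/-- continuity of the general dual Orlicz quermassintegral with respect to
Hausdorff convergence of convex bodies. -/
theorem stmt5 {n : ℕ} (φ : EuclideanSpace ℝ (Fin n) → ℝ)
    (hφc : ContinuousOn φ {(0 : EuclideanSpace ℝ (Fin n))}ᶜ)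
    (hφp : ∀ x : EuclideanSpace ℝ (Fin n), x ≠ 0 → 0 < φ x)
    (hΦi : ∀ t > (0 : ℝ), ∀ u : sphere (0 : EuclideanSpace ℝ (Fin n)) 1,
      IntegrableOn (fun r : ℝ => φ (r • (u : EuclideanSpace ℝ (Fin n))) * r ^ (n - 1)) (Ioi t))
    (hΦc : ∀ t > (0 : ℝ), Continuous (fun u : sphere (0 : EuclideanSpace ℝ (Fin n)) 1 =>
      ∫ r in Ioi t, φ (r • (u : EuclideanSpace ℝ (Fin n))) * r ^ (n - 1)))
    (K : ℕ → Set (EuclideanSpace ℝ (Fin n))) (L : Set (EuclideanSpace ℝ (Fin n)))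
    (hKconv : ∀ i, Convex ℝ (K i)) (hKcomp : ∀ i, IsCompact (K i))
    (hK0 : ∀ i, (0 : EuclideanSpace ℝ (Fin n)) ∈ interior (K i))
    (hLconv : Convex ℝ L) (hLcomp : IsCompact L)
    (hL0 : (0 : EuclideanSpace ℝ (Fin n)) ∈ interior L)
    (hconv : Tendsto (fun i => Metric.hausdorffDist (K i) L) atTop (𝓝 0)) :
    Tendsto (fun i => ∫⁻ x in (K i)ᶜ, ENNReal.ofReal (φ x)) atTop
      (𝓝 (∫⁻ x in Lᶜ, ENNReal.ofReal (φ x))) := by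
  classical
  set f : EuclideanSpace ℝ (Fin n) → ℝ≥0∞ := fun x => ENNReal.ofReal (φ x) with hfdef
  obtain ⟨r, hr, hballL⟩ := Metric.mem_nhds_iff.1 (mem_interior_iff_mem_nhds.1 hL0)
  obtain ⟨R0, hR0⟩ := hLcomp.isBounded.subset_closedBall 0
  set R : ℝ := max R0 1 with hRdef
  have hRpos : (0:ℝ) < R := lt_of_lt_of_le one_pos (le_max_right _ _)
  have hLR : L ⊆ closedBall 0 R := hR0.trans (closedBall_subset_closedBall (le_max_left _ _))
  have h0L : (0 : EuclideanSpace ℝ (Fin n)) ∈ L := hballL (mem_ball_self hr)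
  have hLne : L.Nonempty := ⟨0, h0L⟩
  -- bound for φ on an annulus
  set Ann : Set (EuclideanSpace ℝ (Fin n)) := closedBall 0 (2*R) \ ball 0 (r/2) with hAnndef
  have hAnnC : IsCompact Ann := (isCompact_closedBall _ _).diff isOpen_ball
  have hAnn0 : Ann ⊆ {(0 : EuclideanSpace ℝ (Fin n))}ᶜ := by
    intro x hx hx0
    simp only [mem_singleton_iff] at hx0
    exact hx.2 (by simp [hx0]; positivity)
  obtain ⟨M, hM⟩ := hAnnC.exists_bound_of_continuousOn (hφc.mono hAnn0)
  have hMb : ∀ x ∈ Ann, f x ≤ ENNReal.ofReal M := fun x hx =>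
    ENNReal.ofReal_le_ofReal ((le_abs_self _).trans
      (by simpa [Real.norm_eq_abs] using hM x hx))
  -- the shell
  set shell : ℝ → Set (EuclideanSpace ℝ (Fin n)) :=
    fun δ => ((1+δ) • L) \ ((1-δ) • L) with hshelldef
  have hshellsub : ∀ δ ∈ Ioc (0:ℝ) (1/2), shell δ ⊆ Ann := by
    rintro δ ⟨hδ0, hδ2⟩ x hx
    constructor
    · obtain ⟨y, hy, rfl⟩ := hx.1
      have hyR : ‖y‖ ≤ R := mem_closedBall_zero_iff.1 (hLR hy)
      rw [mem_closedBall_zero_iff]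
      show ‖(1+δ) • y‖ ≤ 2 * R
      rw [norm_smul, Real.norm_eq_abs, abs_of_pos (by linarith)]
      nlinarith [norm_nonneg y]
    · intro hxb
      apply hx.2
      have h1δ : (0:ℝ) < 1 - δ := by linarith
      have hxn : ‖x‖ < r/2 := mem_ball_zero_iff.1 hxb
      have hmem : x ∈ (1-δ) • ball (0 : EuclideanSpace ℝ (Fin n)) r := by
        refine ⟨(1-δ)⁻¹ • x, ?_, ?_⟩
        · rw [mem_ball_zero_iff, norm_smul, norm_inv, Real.norm_eq_abs, abs_of_pos h1δ]
          have h2 : (1-δ)⁻¹ ≤ 2 := by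
            rw [inv_le_comm₀ h1δ (by norm_num)]
            linarith
          nlinarith [norm_nonneg x, inv_pos.2 h1δ]
        · show (1-δ) • ((1-δ)⁻¹ • x) = x
          rw [smul_smul, mul_inv_cancel₀ h1δ.ne', one_smul]
      exact Set.smul_set_mono hballL hmem
  have hμL : volume L ≠ ⊤ := hLcomp.measure_lt_top.ne
  -- compactness / measurability of dilates
  have hdilcomp : ∀ c : ℝ, IsCompact (c • L) := by
    intro c
    rw [← Set.image_smul]
    exact hLcomp.image (continuous_const_smul _)
  -- measure of the shell
  have hμshell : ∀ δ ∈ Ioc (0:ℝ) (1/2),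
      volume (shell δ) ≤ ENNReal.ofReal ((1+δ)^n - (1-δ)^n) * volume L := by
    rintro δ ⟨hδ0, hδ2⟩
    have h1 : volume ((1+δ) • L) = ENNReal.ofReal ((1+δ)^n) * volume L := by
      rw [Measure.addHaar_smul_of_nonneg _ (by linarith) L, finrank_euclideanSpace_fin]
    have h2 : volume ((1-δ) • L) = ENNReal.ofReal ((1-δ)^n) * volume L := by
      rw [Measure.addHaar_smul_of_nonneg _ (by linarith) L, finrank_euclideanSpace_fin]
    have hsub : (1-δ) • L ⊆ (1+δ) • L :=
      aux_scale_mono hLconv h0L (by linarith) (by linarith)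
    have hfin : volume ((1-δ) • L) ≠ ⊤ := by
      rw [h2]; exact ENNReal.mul_ne_top ENNReal.ofReal_ne_top hμL
    have := measure_diff (μ := volume) hsub
      ((hdilcomp (1-δ)).isClosed.measurableSet.nullMeasurableSet) hfin
    rw [hshelldef]
    simp only []
    rw [this, h1, h2, ENNReal.ofReal_sub _ (pow_nonneg (by linarith) n)]
    rw [ENNReal.sub_mul (fun _ _ => hμL)]
  -- bound on the integral over the shell
  have hDbound : ∀ δ ∈ Ioc (0:ℝ) (1/2), (∫⁻ x in shell δ, f x) ≤
      ENNReal.ofReal M * (ENNReal.ofReal ((1+δ)^n - (1-δ)^n) * volume L) := by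
    intro δ hδ
    have hms : MeasurableSet (shell δ) :=
      ((hdilcomp (1+δ)).isClosed.measurableSet).diff (hdilcomp (1-δ)).isClosed.measurableSet
    calc (∫⁻ x in shell δ, f x) ≤ ∫⁻ _x in shell δ, ENNReal.ofReal M :=
          setLIntegral_mono' hms (fun x hx => hMb x (hshellsub δ hδ hx))
      _ = ENNReal.ofReal M * volume (shell δ) := setLIntegral_const _ _
      _ ≤ _ := mul_le_mul_right (hμshell δ hδ) _
  -- the rate tends to zero
  have hrate : Tendsto (fun δ : ℝ =>
      ENNReal.ofReal M * (ENNReal.ofReal ((1+δ)^n - (1-δ)^n) * volume L))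
      (𝓝[>] (0:ℝ)) (𝓝 0) := by
    have hcont : Tendsto (fun δ : ℝ => ((1+δ)^n - (1-δ)^n)) (𝓝[>] (0:ℝ)) (𝓝 0) := by
      have hc : Continuous fun δ : ℝ => ((1+δ)^n - (1-δ)^n) :=
        ((continuous_const.add continuous_id).pow n).sub
          ((continuous_const.sub continuous_id).pow n)
      have := (hc.tendsto 0).mono_left (nhdsWithin_le_nhds (s := Ioi (0:ℝ)))
      simpa using this
    have h1 : Tendsto (fun δ : ℝ => ENNReal.ofReal ((1+δ)^n - (1-δ)^n)) (𝓝[>] (0:ℝ)) (𝓝 0) := by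
      have := (ENNReal.continuous_ofReal.tendsto 0).comp hcont
      simpa [Function.comp_def] using this
    have h2 := ENNReal.Tendsto.mul_const h1 (Or.inr hμL)
    rw [zero_mul] at h2
    have h3 := ENNReal.Tendsto.const_mul (a := ENNReal.ofReal M) h2 (Or.inr ENNReal.ofReal_ne_top)
    rwa [mul_zero] at h3
  -- the error term
  set D : ℕ → ℝ≥0∞ := fun i => ∫⁻ x in (K i \ L) ∪ (L \ K i), f x with hDdef
  have hDto : Tendsto D atTop (𝓝 0) := by
    rw [ENNReal.tendsto_nhds_zero]
    intro ε' hε'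
    have hev : ∀ᶠ δ in 𝓝[>] (0:ℝ),
        (ENNReal.ofReal M * (ENNReal.ofReal ((1+δ)^n - (1-δ)^n) * volume L)) < ε' ∧
        δ ∈ Ioc (0:ℝ) (1/2) := by
      refine Filter.Eventually.and (hrate.eventually_lt_const hε') ?_
      · filter_upwards [Ioc_mem_nhdsGT_of_mem (by norm_num : (0:ℝ) ∈ Ico (0:ℝ) (1/2))]
          with δ hδ using hδ
    obtain ⟨δ, hδb, hδmem⟩ := hev.exists
    obtain ⟨hδ0, hδ2⟩ := hδmem
    set ε : ℝ := δ * r / 2 with hεdef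
    have hεpos : 0 < ε := by positivity
    have hεr : ε < r := by nlinarith
    have hεδr : ε ≤ δ * r := by nlinarith
    filter_upwards [hconv.eventually_lt_const hεpos] with i hi
    have h0Ki : (0 : EuclideanSpace ℝ (Fin n)) ∈ K i := interior_subset (hK0 i)
    have hKine : (K i).Nonempty := ⟨0, h0Ki⟩
    have hne : EMetric.hausdorffEdist (K i) L ≠ ⊤ :=
      hausdorffEdist_ne_top_of_nonempty_of_bounded hKine hLne
        (hKcomp i).isBounded hLcomp.isBounded
    have hKL : ∀ x ∈ K i, ∃ y ∈ L, dist x y < ε := fun x hx =>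
      (infDist_lt_iff hLne).1 ((infDist_le_hausdorffDist_of_mem hx hne).trans_lt hi)
    have hLK : ∀ x ∈ L, ∃ y ∈ K i, dist x y < ε := by
      intro x hx
      have h1 : infDist x (K i) ≤ hausdorffDist L (K i) :=
        infDist_le_hausdorffDist_of_mem hx (by rw [EMetric.hausdorffEdist_comm]; exact hne)
      rw [hausdorffDist_comm] at h1
      exact (infDist_lt_iff hKine).1 (h1.trans_lt hi)
    -- K i ⊆ (1+δ) • L
    have hsub1 : K i ⊆ (1+δ) • L := by
      refine (aux_dilate hLconv hr hεpos hballL hKL).trans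
        (aux_scale_mono hLconv h0L (by positivity) ?_)
      have : ε / r ≤ δ := by rw [div_le_iff₀ hr]; linarith
      linarith
    -- (1-δ) • L ⊆ K i
    have hball2 : ball (0 : EuclideanSpace ℝ (Fin n)) (r-ε) ⊆ K i :=
      aux_ball_subset (hKconv i) (hKcomp i).isClosed hεpos hεr
        (fun x hx => hLK x (hballL hx))
    have hrε : 0 < r - ε := by linarith
    have hsub2 : L ⊆ (1 + ε/(r-ε)) • K i := aux_dilate (hKconv i) hrε hεpos hball2 hLK
    have hsub3 : (1-δ) • L ⊆ K i := by
      have hqnn : 0 ≤ ε/(r-ε) := div_nonneg hεpos.le hrε.le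
      have hqle : ε/(r-ε) ≤ δ := by
        rw [div_le_iff₀ hrε]
        nlinarith
      have hc : (1-δ) * (1 + ε/(r-ε)) ≤ 1 := by nlinarith
      have hstep : (1-δ) • L ⊆ ((1-δ) * (1 + ε/(r-ε))) • K i := by
        rw [← smul_smul]
        exact Set.smul_set_mono hsub2
      refine hstep.trans ?_
      have := aux_scale_mono (hKconv i) h0Ki
        (mul_nonneg (by linarith) (by linarith)) hc
      rwa [one_smul] at this
    have hL1 : L ⊆ (1+δ) • L := by
      have := aux_scale_mono hLconv h0L zero_le_one (by linarith : (1:ℝ) ≤ 1+δ)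
      rwa [one_smul] at this
    have hL2 : (1-δ) • L ⊆ L := by
      have := aux_scale_mono hLconv h0L (by linarith) (by linarith : (1:ℝ)-δ ≤ 1)
      rwa [one_smul] at this
    have hKshell : K i \ L ⊆ shell δ := fun x hx => ⟨hsub1 hx.1, fun hc => hx.2 (hL2 hc)⟩
    have hLshell : L \ K i ⊆ shell δ := fun x hx => ⟨hL1 hx.1, fun hc => hx.2 (hsub3 hc)⟩
    calc D i ≤ ∫⁻ x in shell δ, f x := lintegral_mono_set (union_subset hKshell hLshell)
      _ ≤ _ := hDbound δ ⟨hδ0, hδ2⟩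
      _ ≤ ε' := hδb.le
  -- assembling
  have key1 : ∀ i, (∫⁻ x in (K i)ᶜ, f x) ≤ (∫⁻ x in Lᶜ, f x) + D i := by
    intro i
    calc (∫⁻ x in (K i)ᶜ, f x) ≤ ∫⁻ x in Lᶜ ∪ ((K i \ L) ∪ (L \ K i)), f x := by
          apply lintegral_mono_set
          intro x hx
          by_cases hxL : x ∈ L
          · exact Or.inr (Or.inr ⟨hxL, hx⟩)
          · exact Or.inl hxL
      _ ≤ _ := lintegral_union_le _ _ _
  have key2 : ∀ i, (∫⁻ x in Lᶜ, f x) ≤ (∫⁻ x in (K i)ᶜ, f x) + D i := by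
    intro i
    calc (∫⁻ x in Lᶜ, f x) ≤ ∫⁻ x in (K i)ᶜ ∪ ((K i \ L) ∪ (L \ K i)), f x := by
          apply lintegral_mono_set
          intro x hx
          by_cases hxK : x ∈ K i
          · exact Or.inr (Or.inl ⟨hxK, hx⟩)
          · exact Or.inl hxK
      _ ≤ _ := lintegral_union_le _ _ _
  refine tendsto_of_tendsto_of_tendsto_of_le_of_le (g := fun i => (∫⁻ x in Lᶜ, f x) - D i)
    (h := fun i => (∫⁻ x in Lᶜ, f x) + D i) ?_ ?_
    (fun i => tsub_le_iff_right.2 (key2 i)) key1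
  · have := ENNReal.Tendsto.sub (tendsto_const_nhds (x := ∫⁻ x in Lᶜ, f x) (f := atTop))
      hDto (Or.inr (by simp))
    simpa using this
  · have := Filter.Tendsto.add (tendsto_const_nhds (x := ∫⁻ x in Lᶜ, f x) (f := atTop)) hDto
    simpa using this
end
end

section
/- For a convex body K containing the origin in its interior and continuous φ : ℝⁿ \ {0} → (0,∞) with finite Φ(t,u) for each t>0, the set function η ↦ C̃_{φ,𝒱}(K,η) = ∫_{α*_K(η)} φ(ρ_K(u)u) ρ_K(u)ⁿ du, defined on Borel subsets η of S^{n-1}, is a Borel measure; in particular it is countably additive: for pairwise disjoint Borel sets η₁, η₂, … ⊆ S^{n-1}, C̃_{φ,𝒱}(K, ⋃ᵢ ηᵢ) = Σᵢ C̃_{φ,𝒱}(K, ηᵢ). -/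
open MeasureTheory Metric Set Filter
open scoped ENNReal NNReal Topology Pointwise RealInnerProductSpace

noncomputable section

section DualCurvAux
variable {n : ℕ} {K : Set (EuclideanSpace ℝ (Fin n))}

theorem radialFn_mem_and (hKconv : Convex ℝ K) (hKcomp : IsCompact K)
    (hK0 : (0 : EuclideanSpace ℝ (Fin n)) ∈ interior K)
    (u : sphere (0 : EuclideanSpace ℝ (Fin n)) 1) :
    0 < radialFn K u ∧ radialFn K u • (u : EuclideanSpace ℝ (Fin n)) ∈ K ∧
      radialFn K u • (u : EuclideanSpace ℝ (Fin n)) ∉ interior K := by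
  obtain ⟨ε, hε, hball⟩ : ∃ ε > 0, ball (0 : EuclideanSpace ℝ (Fin n)) ε ⊆ K :=
    Metric.mem_nhds_iff.1 (mem_interior_iff_mem_nhds.1 hK0)
  obtain ⟨M, hM⟩ := hKcomp.isBounded.exists_norm_le
  set R : Set ℝ := {r : ℝ | 0 < r ∧ r • (u : EuclideanSpace ℝ (Fin n)) ∈ K} with hR
  have hnormu : ‖(u : EuclideanSpace ℝ (Fin n))‖ = 1 := norm_eq_of_mem_sphere u
  have hmem_half : (ε / 2) ∈ R := by
    refine ⟨by positivity, hball ?_⟩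
    rw [mem_ball_zero_iff, norm_smul, hnormu, mul_one, Real.norm_eq_abs,
      abs_of_pos (by positivity)]
    linarith
  have hne : R.Nonempty := ⟨_, hmem_half⟩
  have hbdd : BddAbove R := by
    refine ⟨M, fun r hr => ?_⟩
    have := hM _ hr.2
    rwa [norm_smul, hnormu, mul_one, Real.norm_eq_abs, abs_of_pos hr.1] at this
  have hpos : 0 < radialFn K u := lt_of_lt_of_le (by positivity) (le_csSup hbdd hmem_half)
  have hmemK : radialFn K u • (u : EuclideanSpace ℝ (Fin n)) ∈ K := by
    have hclosed : IsClosed {r : ℝ | r • (u : EuclideanSpace ℝ (Fin n)) ∈ K} :=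
      hKcomp.isClosed.preimage (by fun_prop)
    have : radialFn K u ∈ closure R := csSup_mem_closure hne hbdd
    have h2 : closure R ⊆ {r : ℝ | r • (u : EuclideanSpace ℝ (Fin n)) ∈ K} :=
      closure_minimal (fun r hr => hr.2) hclosed
    exact h2 this
  refine ⟨hpos, hmemK, fun hint => ?_⟩
  obtain ⟨δ, hδ, hb⟩ := Metric.isOpen_iff.1 isOpen_interior _ hint
  have : (radialFn K u + δ / 2) ∈ R := by
    refine ⟨by positivity, interior_subset (hb ?_)⟩
    rw [mem_ball, dist_eq_norm, ← sub_smul, add_sub_cancel_left, norm_smul, hnormu, mul_one,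
      Real.norm_eq_abs, abs_of_pos (by positivity)]
    linarith
  have := le_csSup hbdd this
  simp only [radialFn] at this ⊢
  linarith

theorem radialFn_unique (hKconv : Convex ℝ K) (hKcomp : IsCompact K)
    (hK0 : (0 : EuclideanSpace ℝ (Fin n)) ∈ interior K)
    (u : sphere (0 : EuclideanSpace ℝ (Fin n)) 1) {c : ℝ} (hc : 0 < c)
    (hmem : c • (u : EuclideanSpace ℝ (Fin n)) ∈ K)
    (hnint : c • (u : EuclideanSpace ℝ (Fin n)) ∉ interior K) : c = radialFn K u := by
  obtain ⟨M, hM⟩ := hKcomp.isBounded.exists_norm_le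
  have hnormu : ‖(u : EuclideanSpace ℝ (Fin n))‖ = 1 := norm_eq_of_mem_sphere u
  have hbdd : BddAbove {r : ℝ | 0 < r ∧ r • (u : EuclideanSpace ℝ (Fin n)) ∈ K} := by
    refine ⟨M, fun r hr => ?_⟩
    have := hM _ hr.2
    rwa [norm_smul, hnormu, mul_one, Real.norm_eq_abs, abs_of_pos hr.1] at this
  have hle : c ≤ radialFn K u := le_csSup hbdd ⟨hc, hmem⟩
  rcases eq_or_lt_of_le hle with h | h
  · exact h
  · exfalso
    apply hnint
    have hρpos : 0 < radialFn K u := hc.trans h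
    have hcomb := hKconv.combo_interior_closure_mem_interior hK0
      (subset_closure (radialFn_mem_and hKconv hKcomp hK0 u).2.1)
      (a := 1 - c / radialFn K u) (b := c / radialFn K u)
      (by rw [sub_pos]; exact (div_lt_one hρpos).2 h) (by positivity) (by ring)
    rwa [smul_zero, zero_add, smul_smul, div_mul_cancel₀ _ hρpos.ne'] at hcomb

theorem suppFn_bddAbove (hKcomp : IsCompact K) (v : EuclideanSpace ℝ (Fin n)) :
    BddAbove ((fun x => ⟪x, v⟫) '' K) :=
  (hKcomp.image (continuous_id.inner continuous_const)).bddAbove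

theorem le_suppFn (hKcomp : IsCompact K) {x : EuclideanSpace ℝ (Fin n)} (hx : x ∈ K)
    (v : EuclideanSpace ℝ (Fin n)) : ⟪x, v⟫ ≤ suppFn K v :=
  le_csSup (suppFn_bddAbove hKcomp v) (mem_image_of_mem _ hx)

theorem suppFn_continuous (hKcomp : IsCompact K)
    (hK0 : (0 : EuclideanSpace ℝ (Fin n)) ∈ interior K) :
    Continuous (suppFn K) := by
  obtain ⟨M, hM⟩ := hKcomp.isBounded.exists_norm_le
  have hM0 : 0 ≤ M := le_trans (norm_nonneg _) (hM 0 (interior_subset hK0))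
  have hKne : K.Nonempty := ⟨0, interior_subset hK0⟩
  have key : ∀ v w : EuclideanSpace ℝ (Fin n), suppFn K v ≤ suppFn K w + M * ‖v - w‖ := by
    intro v w
    refine csSup_le (hKne.image _) ?_
    rintro y ⟨x, hx, rfl⟩
    have h1 : ⟪x, v - w⟫ = ⟪x, v⟫ - ⟪x, w⟫ := inner_sub_right _ _ _
    have h2 : ⟪x, v - w⟫ ≤ ‖x‖ * ‖v - w‖ := real_inner_le_norm _ _
    have h3 : ‖x‖ * ‖v - w‖ ≤ M * ‖v - w‖ :=
      mul_le_mul_of_nonneg_right (hM _ hx) (norm_nonneg _)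
    have := le_suppFn hKcomp hx w
    simp only at h1 ⊢
    linarith
  have : LipschitzWith M.toNNReal (suppFn K) := by
    apply LipschitzWith.of_dist_le_mul
    intro v w
    rw [Real.dist_eq, abs_sub_le_iff, dist_eq_norm]
    constructor
    · have := key v w
      rw [Real.coe_toNNReal _ hM0]
      linarith
    · have := key w v
      rw [Real.coe_toNNReal _ hM0, ← norm_sub_rev]
      linarith
  exact this.continuous

theorem suppFn_pos (hKcomp : IsCompact K)
    (hK0 : (0 : EuclideanSpace ℝ (Fin n)) ∈ interior K)
    (v : sphere (0 : EuclideanSpace ℝ (Fin n)) 1) :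
    0 < suppFn K (v : EuclideanSpace ℝ (Fin n)) := by
  obtain ⟨ε, hε, hball⟩ : ∃ ε > 0, ball (0 : EuclideanSpace ℝ (Fin n)) ε ⊆ K :=
    Metric.mem_nhds_iff.1 (mem_interior_iff_mem_nhds.1 hK0)
  have hnormv : ‖(v : EuclideanSpace ℝ (Fin n))‖ = 1 := norm_eq_of_mem_sphere v
  have hmem : (ε / 2) • (v : EuclideanSpace ℝ (Fin n)) ∈ K := by
    apply hball
    rw [mem_ball_zero_iff, norm_smul, hnormv, mul_one, Real.norm_eq_abs,
      abs_of_pos (by positivity)]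
    linarith
  have := le_suppFn hKcomp hmem (v : EuclideanSpace ℝ (Fin n))
  rw [real_inner_smul_left, real_inner_self_eq_norm_sq, hnormv] at this
  nlinarith

/-- The set of bad directions: boundary point has two distinct unit normals. -/
def omegaK (K : Set (EuclideanSpace ℝ (Fin n))) : Set (sphere (0 : EuclideanSpace ℝ (Fin n)) 1) :=
  {u | ∃ v₁ v₂ : sphere (0 : EuclideanSpace ℝ (Fin n)) 1, v₁ ≠ v₂ ∧
    ⟪radialFn K u • (u : EuclideanSpace ℝ (Fin n)), (v₁ : EuclideanSpace ℝ (Fin n))⟫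
      = suppFn K (v₁ : EuclideanSpace ℝ (Fin n)) ∧
    ⟪radialFn K u • (u : EuclideanSpace ℝ (Fin n)), (v₂ : EuclideanSpace ℝ (Fin n))⟫
      = suppFn K (v₂ : EuclideanSpace ℝ (Fin n))}

theorem gauge_coe_sphere (hKconv : Convex ℝ K) (hKcomp : IsCompact K)
    (hK0 : (0 : EuclideanSpace ℝ (Fin n)) ∈ interior K)
    (u : sphere (0 : EuclideanSpace ℝ (Fin n)) 1) :
    gauge K (u : EuclideanSpace ℝ (Fin n)) = (radialFn K u)⁻¹ := by
  have habs : Absorbent ℝ K := absorbent_nhds_zero (mem_interior_iff_mem_nhds.1 hK0)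
  obtain ⟨hρpos, hρmem, -⟩ := radialFn_mem_and hKconv hKcomp hK0 u
  obtain ⟨M, hM⟩ := hKcomp.isBounded.exists_norm_le
  have hnormu : ‖(u : EuclideanSpace ℝ (Fin n))‖ = 1 := norm_eq_of_mem_sphere u
  have hbdd : BddAbove {r : ℝ | 0 < r ∧ r • (u : EuclideanSpace ℝ (Fin n)) ∈ K} := by
    refine ⟨M, fun r hr => ?_⟩
    have := hM _ hr.2
    rwa [norm_smul, hnormu, mul_one, Real.norm_eq_abs, abs_of_pos hr.1] at this
  refine le_antisymm ?_ ?_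
  · refine gauge_le_of_mem (by positivity) ?_
    exact ⟨_, hρmem, show (radialFn K u)⁻¹ • (radialFn K u • (u : EuclideanSpace ℝ (Fin n))) = _
      by rw [smul_smul, inv_mul_cancel₀ hρpos.ne', one_smul]⟩
  · by_contra h
    push_neg at h
    obtain ⟨r, hr0, hrlt, hmem⟩ := exists_lt_of_gauge_lt habs h
    obtain ⟨w, hw, hwu⟩ := hmem
    have hwu' : r • w = (u : EuclideanSpace ℝ (Fin n)) := hwu
    have hinv : radialFn K u < r⁻¹ := by
      have := (inv_strictAnti₀ hr0 hrlt)
      rwa [inv_inv] at this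
    have hmem' : r⁻¹ ∈ {r : ℝ | 0 < r ∧ r • (u : EuclideanSpace ℝ (Fin n)) ∈ K} := by
      refine ⟨by positivity, ?_⟩
      rw [← hwu', smul_smul, inv_mul_cancel₀ hr0.ne', one_smul]
      exact hw
    have h2 : r⁻¹ ≤ radialFn K u := le_csSup hbdd hmem'
    linarith

theorem ell_le_gauge (hKconv : Convex ℝ K) (hKcomp : IsCompact K)
    (hK0 : (0 : EuclideanSpace ℝ (Fin n)) ∈ interior K)
    (v : sphere (0 : EuclideanSpace ℝ (Fin n)) 1) (z : EuclideanSpace ℝ (Fin n)) :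
    ⟪z, (v : EuclideanSpace ℝ (Fin n))⟫ / suppFn K (v : EuclideanSpace ℝ (Fin n)) ≤ gauge K z := by
  have habs : Absorbent ℝ K := absorbent_nhds_zero (mem_interior_iff_mem_nhds.1 hK0)
  set c := suppFn K (v : EuclideanSpace ℝ (Fin n)) with hc
  have hcpos : 0 < c := suppFn_pos hKcomp hK0 v
  by_contra h
  push_neg at h
  obtain ⟨r, hr0, hrlt, hmem⟩ := exists_lt_of_gauge_lt habs h
  obtain ⟨w, hw, hwz⟩ := hmem
  have hwz' : r • w = z := hwz
  have hinner : ⟪z, (v : EuclideanSpace ℝ (Fin n))⟫ = r * ⟪w, (v : EuclideanSpace ℝ (Fin n))⟫ := by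
    rw [← hwz', real_inner_smul_left]
  have hwle : ⟪w, (v : EuclideanSpace ℝ (Fin n))⟫ ≤ c := le_suppFn hKcomp hw _
  have : ⟪z, (v : EuclideanSpace ℝ (Fin n))⟫ / c ≤ r := by
    rw [hinner, div_le_iff₀ hcpos]
    nlinarith
  linarith

theorem omegaK_subset_nondiff (hKconv : Convex ℝ K) (hKcomp : IsCompact K)
    (hK0 : (0 : EuclideanSpace ℝ (Fin n)) ∈ interior K) :
    omegaK K ⊆ {u : sphere (0 : EuclideanSpace ℝ (Fin n)) 1 |
      ¬ DifferentiableAt ℝ (gauge K) (u : EuclideanSpace ℝ (Fin n))} := by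
  rintro u ⟨v₁, v₂, hne, h₁, h₂⟩ hdiff
  obtain ⟨hρpos, hρmem, -⟩ := radialFn_mem_and hKconv hKcomp hK0 u
  set ρ := radialFn K u with hρ
  set D := fderiv ℝ (gauge K) (u : EuclideanSpace ℝ (Fin n)) with hD
  have hFD : HasFDerivAt (gauge K) D (u : EuclideanSpace ℝ (Fin n)) := hdiff.hasFDerivAt
  -- the two linear functionals
  have key : ∀ v : sphere (0 : EuclideanSpace ℝ (Fin n)) 1,
      ⟪ρ • (u : EuclideanSpace ℝ (Fin n)), (v : EuclideanSpace ℝ (Fin n))⟫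
        = suppFn K (v : EuclideanSpace ℝ (Fin n)) →
      ∀ w : EuclideanSpace ℝ (Fin n),
        ⟪w, (v : EuclideanSpace ℝ (Fin n))⟫ / suppFn K (v : EuclideanSpace ℝ (Fin n)) = D w := by
    intro v hv w
    set c := suppFn K (v : EuclideanSpace ℝ (Fin n)) with hc
    have hcpos : 0 < c := suppFn_pos hKcomp hK0 v
    set ℓ : EuclideanSpace ℝ (Fin n) → ℝ := fun z => ⟪z, (v : EuclideanSpace ℝ (Fin n))⟫ / c
      with hℓ
    have hℓle : ∀ z, ℓ z ≤ gauge K z := fun z => ell_le_gauge hKconv hKcomp hK0 v z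
    have hℓu : ℓ (u : EuclideanSpace ℝ (Fin n)) = gauge K (u : EuclideanSpace ℝ (Fin n)) := by
      rw [gauge_coe_sphere hKconv hKcomp hK0 u]
      have : ⟪(u : EuclideanSpace ℝ (Fin n)), (v : EuclideanSpace ℝ (Fin n))⟫ = c / ρ := by
        have := hv
        rw [real_inner_smul_left] at this
        field_simp at this ⊢
        linarith [this]
      simp only [hℓ, this]
      rw [div_div, mul_comm, ← div_div, div_self hcpos.ne']
      rw [one_div]
    -- main inequality: ℓ w' ≤ D w' for every w'
    have hmain : ∀ w' : EuclideanSpace ℝ (Fin n), ℓ w' ≤ D w' := by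
      intro w'
      -- directional derivative along w'
      have hline : HasDerivAt (fun t : ℝ => (u : EuclideanSpace ℝ (Fin n)) + t • w') w' 0 := by
        simpa using ((hasDerivAt_id (0 : ℝ)).smul_const w').const_add
          (u : EuclideanSpace ℝ (Fin n))
      have hγ : HasDerivAt (fun t : ℝ => gauge K ((u : EuclideanSpace ℝ (Fin n)) + t • w'))
          (D w') 0 := by
        have := hFD.comp_hasDerivAt_of_eq (x := (0:ℝ))
          (f := fun t : ℝ => (u : EuclideanSpace ℝ (Fin n)) + t • w') hline (by simp)
        exact this
      have hslope := hasDerivAt_iff_tendsto_slope.1 hγ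
      have hslope' : Tendsto (slope (fun t : ℝ =>
          gauge K ((u : EuclideanSpace ℝ (Fin n)) + t • w')) 0) (𝓝[>] 0) (𝓝 (D w')) :=
        hslope.mono_left (nhdsWithin_mono 0 (fun t ht => ne_of_gt ht))
      refine ge_of_tendsto hslope' ?_
      filter_upwards [self_mem_nhdsWithin] with t ht
      have ht0 : (0 : ℝ) < t := ht
      rw [slope_def_field]
      have hlin : ℓ ((u : EuclideanSpace ℝ (Fin n)) + t • w')
          = ℓ (u : EuclideanSpace ℝ (Fin n)) + t * ℓ w' := by
        simp only [hℓ, inner_add_left, real_inner_smul_left]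
        ring
      have h1 : ℓ ((u : EuclideanSpace ℝ (Fin n)) + t • w')
          ≤ gauge K ((u : EuclideanSpace ℝ (Fin n)) + t • w') := hℓle _
      have h2 : gauge K ((u : EuclideanSpace ℝ (Fin n)) + (0:ℝ) • w')
          = ℓ (u : EuclideanSpace ℝ (Fin n)) := by rw [hℓu]; norm_num
      rw [sub_zero, le_div_iff₀ ht0]
      nlinarith [h1, hlin, h2]
    have hboth : ∀ w', ℓ w' = D w' := by
      intro w'
      refine le_antisymm (hmain w') ?_
      have := hmain (-w')
      have hneg : ℓ (-w') = - ℓ w' := by simp [hℓ, inner_neg_left]; ring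
      rw [hneg, map_neg] at this
      linarith
    exact hboth w
  have e₁ := key v₁ h₁
  have e₂ := key v₂ h₂
  set c₁ := suppFn K (v₁ : EuclideanSpace ℝ (Fin n)) with hc₁
  set c₂ := suppFn K (v₂ : EuclideanSpace ℝ (Fin n)) with hc₂
  have hc₁pos : 0 < c₁ := suppFn_pos hKcomp hK0 v₁
  have hc₂pos : 0 < c₂ := suppFn_pos hKcomp hK0 v₂
  have hvec : c₁⁻¹ • (v₁ : EuclideanSpace ℝ (Fin n)) = c₂⁻¹ • (v₂ : EuclideanSpace ℝ (Fin n)) := by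
    have hz : ∀ z : EuclideanSpace ℝ (Fin n),
        ⟪z, c₁⁻¹ • (v₁ : EuclideanSpace ℝ (Fin n)) - c₂⁻¹ • (v₂ : EuclideanSpace ℝ (Fin n))⟫
          = 0 := by
      intro z
      rw [inner_sub_right, real_inner_smul_right, real_inner_smul_right]
      have a1 := e₁ z
      have a2 := e₂ z
      rw [div_eq_inv_mul] at a1 a2
      linarith
    have h0 := hz (c₁⁻¹ • (v₁ : EuclideanSpace ℝ (Fin n)) - c₂⁻¹ • (v₂ : EuclideanSpace ℝ (Fin n)))
    have : (c₁⁻¹ • (v₁ : EuclideanSpace ℝ (Fin n)) - c₂⁻¹ • (v₂ : EuclideanSpace ℝ (Fin n))) = 0 :=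
      inner_self_eq_zero.1 h0
    exact sub_eq_zero.1 this
  apply hne
  have hnorm : ‖c₁⁻¹ • (v₁ : EuclideanSpace ℝ (Fin n))‖ = ‖c₂⁻¹ • (v₂ : EuclideanSpace ℝ (Fin n))‖ :=
    by rw [hvec]
  rw [norm_smul, norm_smul, norm_eq_of_mem_sphere v₁, norm_eq_of_mem_sphere v₂, mul_one, mul_one,
    Real.norm_eq_abs, Real.norm_eq_abs, abs_of_pos (by positivity), abs_of_pos (by positivity)]
    at hnorm
  have hceq : c₁ = c₂ := by
    have := congrArg (fun x : ℝ => x⁻¹) hnorm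
    simpa using this
  rw [hceq] at hvec
  have : (v₁ : EuclideanSpace ℝ (Fin n)) = (v₂ : EuclideanSpace ℝ (Fin n)) :=
    smul_right_injective _ (by positivity : (0:ℝ) < c₂⁻¹).ne' hvec
  exact Subtype.ext this

theorem sphMeasure_omegaK (hKconv : Convex ℝ K) (hKcomp : IsCompact K)
    (hK0 : (0 : EuclideanSpace ℝ (Fin n)) ∈ interior K) :
    sphMeasure n (omegaK K) = 0 := by
  set g := gauge K with hg
  obtain ⟨C, hC⟩ := hKconv.lipschitz_gauge (mem_interior_iff_mem_nhds.1 hK0)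
  set N : Set (EuclideanSpace ℝ (Fin n)) := {x | ¬ DifferentiableAt ℝ g x} with hN
  have hNvol : volume N = 0 := by
    have h := hC.ae_differentiableAt (μ := volume)
    exact ae_iff.1 h
  have hNmeas : MeasurableSet N := (measurableSet_of_differentiableAt ℝ g).compl
  have hNcone : ∀ r : ℝ, 0 < r → ∀ x ∈ N, r • x ∈ N := by
    intro r hr x hx hdiff
    apply hx
    have h1 : DifferentiableAt ℝ (fun y : EuclideanSpace ℝ (Fin n) => r⁻¹ * g (r • y)) x := by
      have h2 : DifferentiableAt ℝ (fun y : EuclideanSpace ℝ (Fin n) => r • y) x :=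
        (differentiableAt_id.const_smul r)
      exact (hdiff.comp x h2).const_mul _
    have heq : (fun y : EuclideanSpace ℝ (Fin n) => r⁻¹ * g (r • y)) = g := by
      funext y
      rw [hg, gauge_smul_of_nonneg hr.le, smul_eq_mul, ← mul_assoc, inv_mul_cancel₀ hr.ne',
        one_mul]
    rwa [heq] at h1
  -- the bad set on the sphere
  set S' : Set (sphere (0 : EuclideanSpace ℝ (Fin n)) 1) :=
    {u | (u : EuclideanSpace ℝ (Fin n)) ∈ N} with hS'
  have hS'meas : MeasurableSet S' := continuous_subtype_val.measurable hNmeas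
  have hsub : omegaK K ⊆ S' := omegaK_subset_nondiff hKconv hKcomp hK0
  refine measure_mono_null hsub ?_
  rw [sphMeasure, Measure.toSphere_apply' _ hS'meas]
  have hzero : volume (Ioo (0:ℝ) 1 • ((Subtype.val) '' S')) = 0 := by
    refine measure_mono_null ?_ hNvol
    rintro y hy
    rw [Set.mem_smul] at hy
    obtain ⟨r, hr, x, hx, rfl⟩ := hy
    obtain ⟨u, hu, rfl⟩ := hx
    exact hNcone r hr.1 _ hu
  rw [hzero, mul_zero]

theorem revGauss_iUnion {ι : Sort*} (η : ι → Set (sphere (0 : EuclideanSpace ℝ (Fin n)) 1)) :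
    revGauss K (⋃ i, η i) = ⋃ i, revGauss K (η i) := by
  ext u
  simp only [revGauss, mem_setOf_eq, mem_iUnion]
  tauto

theorem revGauss_union (η₁ η₂ : Set (sphere (0 : EuclideanSpace ℝ (Fin n)) 1)) :
    revGauss K (η₁ ∪ η₂) = revGauss K η₁ ∪ revGauss K η₂ := by
  ext u
  constructor
  · rintro ⟨v, hv, he⟩
    cases hv with
    | inl h => exact Or.inl ⟨v, h, he⟩
    | inr h => exact Or.inr ⟨v, h, he⟩
  · rintro (⟨v, h, he⟩ | ⟨v, h, he⟩)
    exacts [⟨v, Or.inl h, he⟩, ⟨v, Or.inr h, he⟩]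

theorem revGauss_inter_subset_omegaK {η₁ η₂ : Set (sphere (0 : EuclideanSpace ℝ (Fin n)) 1)}
    (hd : Disjoint η₁ η₂) : revGauss K η₁ ∩ revGauss K η₂ ⊆ omegaK K := by
  rintro u ⟨⟨v₁, hv₁, he₁⟩, ⟨v₂, hv₂, he₂⟩⟩
  refine ⟨v₁, v₂, fun h => ?_, he₁, he₂⟩
  exact (Set.disjoint_left.1 hd hv₁) (h ▸ hv₂)

theorem revGauss_univ (hKconv : Convex ℝ K) (hKcomp : IsCompact K)
    (hK0 : (0 : EuclideanSpace ℝ (Fin n)) ∈ interior K) :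
    revGauss K (univ : Set (sphere (0 : EuclideanSpace ℝ (Fin n)) 1)) = univ := by
  refine eq_univ_of_forall fun u => ?_
  obtain ⟨hρpos, hρmem, hρnint⟩ := radialFn_mem_and hKconv hKcomp hK0 u
  set x := radialFn K u • (u : EuclideanSpace ℝ (Fin n)) with hx
  obtain ⟨f, hf⟩ := geometric_hahn_banach_open_point (hKconv.interior) isOpen_interior hρnint
  have hfle : ∀ a ∈ K, f a ≤ f x := by
    intro a ha
    have htend : Tendsto (fun t : ℝ => (1 - t) * f a) (𝓝[>] 0) (𝓝 (f a)) := by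
      have : Tendsto (fun t : ℝ => (1 - t) * f a) (𝓝 0) (𝓝 ((1 - 0) * f a)) :=
        ((continuous_const.sub continuous_id).mul continuous_const).tendsto 0
      simp only [sub_zero, one_mul] at this
      exact this.mono_left nhdsWithin_le_nhds
    refine le_of_tendsto htend ?_
    filter_upwards [Ioo_mem_nhdsGT_of_mem (by norm_num : (0:ℝ) ∈ Ico (0:ℝ) 1)] with t ht
    have hmem : (1 - t) • a + t • (0 : EuclideanSpace ℝ (Fin n)) ∈ interior K :=
      hKconv.combo_closure_interior_mem_interior (subset_closure ha) hK0
        (by linarith [ht.2]) ht.1 (by ring)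
    have := hf _ hmem
    rw [smul_zero, add_zero, ContinuousLinearMap.map_smul, smul_eq_mul] at this
    exact this.le
  have hfxpos : 0 < f x := by
    have := hf 0 hK0
    rwa [map_zero] at this
  set v : EuclideanSpace ℝ (Fin n) := (InnerProductSpace.toDual ℝ _).symm f with hv
  have hvinner : ∀ y, ⟪y, v⟫ = f y := by
    intro y
    rw [real_inner_comm]
    exact InnerProductSpace.toDual_symm_apply
  have hvne : v ≠ 0 := by
    intro h
    have := hvinner x
    rw [h, inner_zero_right] at this
    exact hfxpos.ne this
  have hvnorm : (0:ℝ) < ‖v‖ := norm_pos_iff.2 hvne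
  refine ⟨⟨‖v‖⁻¹ • v, ?_⟩, mem_univ _, ?_⟩
  · rw [mem_sphere_zero_iff_norm, norm_smul, Real.norm_eq_abs, abs_of_pos (by positivity),
      inv_mul_cancel₀ hvnorm.ne']
  · show ⟪x, ‖v‖⁻¹ • v⟫ = suppFn K (‖v‖⁻¹ • v)
    have hgr : IsGreatest ((fun y => ⟪y, ‖v‖⁻¹ • v⟫) '' K) ⟪x, ‖v‖⁻¹ • v⟫ := by
      constructor
      · exact mem_image_of_mem _ hρmem
      · rintro y ⟨a, ha, rfl⟩
        show ⟪a, ‖v‖⁻¹ • v⟫ ≤ ⟪x, ‖v‖⁻¹ • v⟫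
        rw [real_inner_smul_right, real_inner_smul_right, hvinner, hvinner]
        exact mul_le_mul_of_nonneg_left (hfle a ha) (by positivity)
    exact hgr.csSup_eq.symm

theorem revGauss_isClosed (hKconv : Convex ℝ K) (hKcomp : IsCompact K)
    (hK0 : (0 : EuclideanSpace ℝ (Fin n)) ∈ interior K)
    {η : Set (sphere (0 : EuclideanSpace ℝ (Fin n)) 1)} (hη : IsClosed η) :
    IsClosed (revGauss K η) := by
  obtain ⟨ε, hε, hball⟩ : ∃ ε > 0, ball (0 : EuclideanSpace ℝ (Fin n)) ε ⊆ K :=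
    Metric.mem_nhds_iff.1 (mem_interior_iff_mem_nhds.1 hK0)
  have hballint : ball (0 : EuclideanSpace ℝ (Fin n)) ε ⊆ interior K :=
    interior_maximal hball isOpen_ball
  -- the boundary-like set
  set B : Set (EuclideanSpace ℝ (Fin n)) := K \ interior K with hB
  have hBclosed : IsClosed B := hKcomp.isClosed.inter isOpen_interior.isClosed_compl
  have hBcomp : IsCompact B := hKcomp.of_isClosed_subset hBclosed diff_subset
  have hBnorm : ∀ y ∈ B, ε ≤ ‖y‖ := by
    intro y hy
    by_contra h
    push_neg at h
    exact hy.2 (hballint (mem_ball_zero_iff.2 h))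
  apply IsSeqClosed.isClosed
  intro useq u hseq hlim
  -- choose the normals
  choose vseq hvmem hveq using hseq
  have hηcomp : IsCompact η := hη.isCompact
  obtain ⟨v, hvη, φ₁, hφ₁, hv⟩ := hηcomp.tendsto_subseq hvmem
  set Xseq : ℕ → EuclideanSpace ℝ (Fin n) :=
    fun k => radialFn K (useq k) • ((useq k : EuclideanSpace ℝ (Fin n))) with hX
  have hXB : ∀ k, Xseq k ∈ B := by
    intro k
    obtain ⟨h1, h2, h3⟩ := radialFn_mem_and hKconv hKcomp hK0 (useq k)
    exact ⟨h2, h3⟩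
  obtain ⟨x, hxB, φ₂, hφ₂, hxlim⟩ := hBcomp.tendsto_subseq (fun k => hXB (φ₁ k))
  set ψ : ℕ → ℕ := φ₁ ∘ φ₂ with hψ
  have hψmono : StrictMono ψ := hφ₁.comp hφ₂
  have hulim : Tendsto (fun k => useq (ψ k)) atTop (𝓝 u) := hlim.comp hψmono.tendsto_atTop
  have hulim' : Tendsto (fun k => (useq (ψ k) : EuclideanSpace ℝ (Fin n))) atTop
      (𝓝 (u : EuclideanSpace ℝ (Fin n))) :=
    ((continuous_subtype_val.tendsto u).comp hulim)
  have hvlim : Tendsto (fun k => (vseq (ψ k) : EuclideanSpace ℝ (Fin n))) atTop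
      (𝓝 (v : EuclideanSpace ℝ (Fin n))) :=
    (continuous_subtype_val.tendsto v).comp (hv.comp hφ₂.tendsto_atTop)
  have hxlim' : Tendsto (fun k => Xseq (ψ k)) atTop (𝓝 x) := hxlim
  -- radial values converge to ‖x‖
  have hρval : ∀ k, radialFn K (useq k) = ‖Xseq k‖ := by
    intro k
    obtain ⟨h1, -, -⟩ := radialFn_mem_and hKconv hKcomp hK0 (useq k)
    rw [hX]
    rw [norm_smul, norm_eq_of_mem_sphere (useq k), mul_one, Real.norm_eq_abs, abs_of_pos h1]
  have hρlim : Tendsto (fun k => radialFn K (useq (ψ k))) atTop (𝓝 ‖x‖) := by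
    have : Tendsto (fun k => ‖Xseq (ψ k)‖) atTop (𝓝 ‖x‖) := hxlim'.norm
    simpa [hρval] using this
  have hxnorm : 0 < ‖x‖ := lt_of_lt_of_le hε (hBnorm x hxB)
  -- identify the limit x
  have hxu : x = ‖x‖ • (u : EuclideanSpace ℝ (Fin n)) := by
    have h2 : Tendsto (fun k => Xseq (ψ k)) atTop (𝓝 (‖x‖ • (u : EuclideanSpace ℝ (Fin n)))) :=
      hρlim.smul hulim'
    exact tendsto_nhds_unique hxlim' h2
  have hρu : radialFn K u = ‖x‖ := by
    have := radialFn_unique hKconv hKcomp hK0 u hxnorm (hxu ▸ hxB.1) (hxu ▸ hxB.2)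
    exact this.symm
  -- pass to the limit in the support equality
  refine ⟨v, hvη, ?_⟩
  have hL : Tendsto (fun k => ⟪Xseq (ψ k), (vseq (ψ k) : EuclideanSpace ℝ (Fin n))⟫) atTop
      (𝓝 ⟪x, (v : EuclideanSpace ℝ (Fin n))⟫) := hxlim'.inner hvlim
  have hR : Tendsto (fun k => suppFn K (vseq (ψ k) : EuclideanSpace ℝ (Fin n))) atTop
      (𝓝 (suppFn K (v : EuclideanSpace ℝ (Fin n)))) :=
    ((suppFn_continuous hKcomp hK0).tendsto _).comp hvlim
  have heq : ∀ k, ⟪Xseq (ψ k), (vseq (ψ k) : EuclideanSpace ℝ (Fin n))⟫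
      = suppFn K (vseq (ψ k) : EuclideanSpace ℝ (Fin n)) := fun k => hveq (ψ k)
  have hfinal : ⟪x, (v : EuclideanSpace ℝ (Fin n))⟫ = suppFn K (v : EuclideanSpace ℝ (Fin n)) :=
    tendsto_nhds_unique (by simpa only [heq] using hL) hR
  rw [hρu, ← hxu]
  exact hfinal

variable (hKconv : Convex ℝ K) (hKcomp : IsCompact K)
    (hK0 : (0 : EuclideanSpace ℝ (Fin n)) ∈ interior K)

include hKconv hKcomp hK0

theorem revGauss_compl_aeEq (η : Set (sphere (0 : EuclideanSpace ℝ (Fin n)) 1)) :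
    revGauss K ηᶜ =ᵐ[sphMeasure n] (revGauss K η)ᶜ := by
  have hω := sphMeasure_omegaK hKconv hKcomp hK0
  have hu : revGauss K η ∪ revGauss K ηᶜ = univ := by
    rw [← revGauss_union, union_compl_self, revGauss_univ hKconv hKcomp hK0]
  have hi : revGauss K η ∩ revGauss K ηᶜ ⊆ omegaK K :=
    revGauss_inter_subset_omegaK disjoint_compl_right
  refine MeasureTheory.ae_eq_set.2 ?_
  constructor
  · refine measure_mono_null (fun x hx => ?_) hω
    exact hi ⟨not_not.1 (fun h => hx.2 h), hx.1⟩
  · refine measure_mono_null (fun x hx => ?_) (measure_empty (μ := sphMeasure n))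
    rcases (hu ▸ mem_univ x : x ∈ revGauss K η ∪ revGauss K ηᶜ) with h | h
    · exact absurd h hx.1
    · exact absurd h hx.2

theorem revGauss_nullMeasurable {η : Set (sphere (0 : EuclideanSpace ℝ (Fin n)) 1)}
    (hη : MeasurableSet η) : NullMeasurableSet (revGauss K η) (sphMeasure n) := by
  refine MeasurableSet.induction_on_open
    (C := fun η _ => NullMeasurableSet (revGauss K η) (sphMeasure n)) ?_ ?_ ?_ η hη
  · intro U hU
    · have h1 : IsClosed (revGauss K Uᶜ) := revGauss_isClosed hKconv hKcomp hK0 hU.isClosed_compl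
      have h2 : revGauss K Uᶜᶜ =ᵐ[sphMeasure n] (revGauss K Uᶜ)ᶜ :=
        revGauss_compl_aeEq hKconv hKcomp hK0 Uᶜ
      rw [compl_compl] at h2
      exact (h1.measurableSet.compl.nullMeasurableSet).congr h2.symm
  · intro t ht iht
    exact iht.compl.congr (revGauss_compl_aeEq hKconv hKcomp hK0 t).symm
  · intro f hdisj hmeas ihf
    rw [revGauss_iUnion]
    exact NullMeasurableSet.iUnion ihf


end DualCurvAux

/-- the general dual Orlicz curvature measure is countably additive on
Borel subsets of the sphere, hence a Borel measure. -/
theorem stmt6 {n : ℕ} (φ : EuclideanSpace ℝ (Fin n) → ℝ)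
    (hφc : ContinuousOn φ {(0 : EuclideanSpace ℝ (Fin n))}ᶜ)
    (hφp : ∀ x : EuclideanSpace ℝ (Fin n), x ≠ 0 → 0 < φ x)
    (hΦi : ∀ t > (0 : ℝ), ∀ u : sphere (0 : EuclideanSpace ℝ (Fin n)) 1,
      IntegrableOn (fun r : ℝ => φ (r • (u : EuclideanSpace ℝ (Fin n))) * r ^ (n - 1)) (Ioi t))
    (K : Set (EuclideanSpace ℝ (Fin n)))
    (hKconv : Convex ℝ K) (hKcomp : IsCompact K)
    (hK0 : (0 : EuclideanSpace ℝ (Fin n)) ∈ interior K)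
    (η : ℕ → Set (sphere (0 : EuclideanSpace ℝ (Fin n)) 1))
    (hηm : ∀ i, MeasurableSet (η i)) (hηd : Pairwise (Function.onFun Disjoint η)) :
    dualCurv φ K (⋃ i, η i) = ∑' i, dualCurv φ K (η i) := by
  unfold dualCurv
  rw [revGauss_iUnion]
  exact lintegral_iUnion₀
    (fun i => revGauss_nullMeasurable hKconv hKcomp hK0 (hηm i))
    (fun i j hij => measure_mono_null
      (revGauss_inter_subset_omegaK (hηd hij))
      (sphMeasure_omegaK hKconv hKcomp hK0)) _
end
end

section
/- Let K be a convex body containing the origin in its interior and φ : ℝⁿ \ {0} → (0,∞) continuous such that ⟨x, ν_K(x)⟩ φ(x) ≥ M > 0 for all x ∈ ∂'K for some constant M. Then for every ξ ∈ S^{n-1}, ∫_{S^{n-1}} ⟨ξ, v⟩₊ dC̃_{φ,𝒱}(K, v) > 0; i.e., the general dual Orlicz curvature measure C̃_{φ,𝒱}(K,·) is not concentrated on any closed hemisphere. -/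
open MeasureTheory Metric Set Filter
open scoped ENNReal NNReal Topology Pointwise RealInnerProductSpace

noncomputable section

/-- The set of boundary points of `K` having a unique outer unit normal vector. -/
def regBdry {n : ℕ} (K : Set (EuclideanSpace ℝ (Fin n))) : Set (EuclideanSpace ℝ (Fin n)) :=
  {x ∈ frontier K | ∃! v : sphere (0 : EuclideanSpace ℝ (Fin n)) 1,
    ⟪x, (v : EuclideanSpace ℝ (Fin n))⟫ = suppFn K (v : EuclideanSpace ℝ (Fin n))}

/-- Abbreviation for the ambient Euclidean space. -/
abbrev Esp (n : ℕ) := EuclideanSpace ℝ (Fin n)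

set_option maxHeartbeats 1600000 in
/-- the general dual Orlicz curvature measure is not concentrated on any
closed hemisphere. -/
theorem stmt15 {n : ℕ} (hn : 0 < n) (φ : EuclideanSpace ℝ (Fin n) → ℝ)
    (hφc : ContinuousOn φ {(0 : EuclideanSpace ℝ (Fin n))}ᶜ)
    (hφp : ∀ x : EuclideanSpace ℝ (Fin n), x ≠ 0 → 0 < φ x)
    (K : Set (EuclideanSpace ℝ (Fin n)))
    (hKconv : Convex ℝ K) (hKcomp : IsCompact K)
    (hK0 : (0 : EuclideanSpace ℝ (Fin n)) ∈ interior K)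
    (C : Measure (sphere (0 : EuclideanSpace ℝ (Fin n)) 1))
    (hC : ∀ η : Set (sphere (0 : EuclideanSpace ℝ (Fin n)) 1), MeasurableSet η →
      C η = dualCurv φ K η)
    (ν : EuclideanSpace ℝ (Fin n) → sphere (0 : EuclideanSpace ℝ (Fin n)) 1)
    (hν : ∀ x ∈ regBdry K,
      ⟪x, (ν x : EuclideanSpace ℝ (Fin n))⟫ = suppFn K (ν x : EuclideanSpace ℝ (Fin n)))
    (M : ℝ) (hM : 0 < M)
    (hlow : ∀ x ∈ regBdry K, M ≤ ⟪x, (ν x : EuclideanSpace ℝ (Fin n))⟫ * φ x) :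
    ∀ ξ : EuclideanSpace ℝ (Fin n), ‖ξ‖ = 1 →
      0 < ∫ v, max ⟪ξ, (v : EuclideanSpace ℝ (Fin n))⟫ 0 ∂C := by
  intro ξ hξ
  have hnorm : ∀ u : sphere (0 : Esp n) 1, ‖(u : Esp n)‖ = 1 := fun u =>
    mem_sphere_zero_iff_norm.1 u.2
  -- inner ball and outer ball
  obtain ⟨ε, hε, hball⟩ := Metric.mem_nhds_iff.1 (mem_interior_iff_mem_nhds.1 hK0)
  set r₀ : ℝ := ε / 2 with hr₀def
  have hr₀ : 0 < r₀ := by positivity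
  have hr₀K : ∀ y : Esp n, ‖y‖ ≤ r₀ → y ∈ K := by
    intro y hy
    exact hball (by
      rw [mem_ball_zero_iff]
      linarith [half_lt_self hε])
  obtain ⟨R', hR'⟩ := hKcomp.isBounded.subset_closedBall 0
  set R : ℝ := max R' r₀ with hRdef
  have hr₀R : r₀ ≤ R := le_max_right _ _
  have hR : 0 < R := lt_of_lt_of_le hr₀ hr₀R
  have hKR : ∀ y ∈ K, ‖y‖ ≤ R := fun y hy =>
    le_trans (mem_closedBall_zero_iff.1 (hR' hy)) (le_max_left _ _)
  -- basic facts about the radial function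
  have hSmem : ∀ u : sphere (0 : Esp n) 1, r₀ ∈ {r : ℝ | 0 < r ∧ r • (u : Esp n) ∈ K} := by
    intro u
    refine ⟨hr₀, hr₀K _ ?_⟩
    rw [norm_smul, hnorm u, mul_one, Real.norm_eq_abs, abs_of_pos hr₀]
  have hSbdd : ∀ u : sphere (0 : Esp n) 1, ∀ r ∈ {r : ℝ | 0 < r ∧ r • (u : Esp n) ∈ K}, r ≤ R := by
    intro u r hr
    have := hKR _ hr.2
    rwa [norm_smul, hnorm u, mul_one, Real.norm_eq_abs, abs_of_pos hr.1] at this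
  have hrad_ge : ∀ u : sphere (0 : Esp n) 1, r₀ ≤ radialFn K u := fun u =>
    le_csSup ⟨R, fun r hr => hSbdd u r hr⟩ (hSmem u)
  have hrad_le : ∀ u : sphere (0 : Esp n) 1, radialFn K u ≤ R := fun u =>
    csSup_le ⟨r₀, hSmem u⟩ (hSbdd u)
  have hrad_pos : ∀ u : sphere (0 : Esp n) 1, 0 < radialFn K u := fun u =>
    lt_of_lt_of_le hr₀ (hrad_ge u)
  -- the radial point lies in K
  have hxK : ∀ u : sphere (0 : Esp n) 1, radialFn K u • (u : Esp n) ∈ K := by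
    intro u
    have hcl : radialFn K u • (u : Esp n) ∈ closure K := by
      rw [Metric.mem_closure_iff]
      intro ε' hε'
      obtain ⟨r, hrS, hlt⟩ := exists_lt_of_lt_csSup ⟨r₀, hSmem u⟩
        (show radialFn K u - ε' < radialFn K u by linarith)
      refine ⟨r • u, hrS.2, ?_⟩
      have hrle : r ≤ radialFn K u := le_csSup ⟨R, fun r hr => hSbdd u r hr⟩ hrS
      rw [dist_eq_norm, ← sub_smul, norm_smul, hnorm u, mul_one, Real.norm_eq_abs,
        abs_of_nonneg (by linarith)]
      linarith
    rwa [hKcomp.isClosed.closure_eq] at hcl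
  -- the radial point is on the frontier
  have hxint : ∀ u : sphere (0 : Esp n) 1, radialFn K u • (u : Esp n) ∉ interior K := by
    intro u hint
    obtain ⟨ε', hε', hb⟩ := Metric.isOpen_iff.1 isOpen_interior _ hint
    have hmem : radialFn K u + ε' / 2 ∈ {r : ℝ | 0 < r ∧ r • (u : Esp n) ∈ K} := by
      refine ⟨by linarith [hrad_pos u], ?_⟩
      have : (radialFn K u + ε' / 2) • (u : Esp n) ∈ ball (radialFn K u • (u : Esp n)) ε' := by
        rw [mem_ball, dist_eq_norm, ← sub_smul]
        have : radialFn K u + ε' / 2 - radialFn K u = ε' / 2 := by ring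
        rw [this, norm_smul, hnorm u, mul_one, Real.norm_eq_abs, abs_of_pos (by linarith)]
        linarith
      exact interior_subset (hb this)
    have hle := le_csSup ⟨R, fun r hr => hSbdd u r hr⟩ hmem
    have heq : sSup {r : ℝ | 0 < r ∧ r • (u : Esp n) ∈ K} = radialFn K u := rfl
    rw [heq] at hle
    linarith
  -- supporting normal at each radial point
  have hsupp : ∀ u : sphere (0 : Esp n) 1, ∃ v : sphere (0 : Esp n) 1,
      ⟪radialFn K u • (u : Esp n), (v : Esp n)⟫ = suppFn K (v : Esp n) ∧ r₀ / R ≤ ⟪(u : Esp n), (v : Esp n)⟫ := by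
    intro u
    set x : Esp n := radialFn K u • (u : Esp n) with hxdef
    obtain ⟨f, hf⟩ := geometric_hahn_banach_open_point hKconv.interior isOpen_interior (hxint u)
    have hfx : 0 < f x := by
      have h := hf 0 hK0
      rwa [map_zero] at h
    have hfK : ∀ a ∈ K, f a ≤ f x := by
      intro a ha
      by_contra hlt
      push_neg at hlt
      set t : ℝ := f x / f a with htdef
      have hfa : 0 < f a := lt_trans hfx hlt
      have ht0 : 0 < t := div_pos hfx hfa
      have ht1 : t < 1 := (div_lt_one hfa).2 hlt
      have hmem : (1 - t) • (0 : Esp n) + t • a ∈ interior K :=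
        hKconv.combo_interior_closure_mem_interior hK0 (subset_closure ha)
          (by linarith) ht0.le (by ring)
      have := hf _ hmem
      rw [smul_zero, zero_add, f.map_smul] at this
      have ht : t • f a = f x := by
        rw [smul_eq_mul, htdef, div_mul_cancel₀ _ hfa.ne']
      rw [ht] at this
      exact lt_irrefl _ this
    set w : Esp n := (InnerProductSpace.toDual ℝ (Esp n)).symm f with hwdef
    have hw : ∀ y : Esp n, ⟪w, y⟫ = f y := fun y => InnerProductSpace.toDual_symm_apply
    have hw' : ∀ y : Esp n, ⟪y, w⟫ = f y := fun y => by rw [real_inner_comm]; exact hw y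
    have hw0 : w ≠ 0 := by
      intro h
      have : f x = 0 := by rw [← hw x, h, inner_zero_left]
      linarith
    have hnw : 0 < ‖w‖ := norm_pos_iff.2 hw0
    refine ⟨⟨‖w‖⁻¹ • w, ?_⟩, ?_, ?_⟩
    · rw [mem_sphere_zero_iff_norm, norm_smul, Real.norm_eq_abs, abs_of_pos (by positivity),
        inv_mul_cancel₀ hnw.ne']
    · -- the support function value
      have hub : ∀ a ∈ K, ⟪a, ‖w‖⁻¹ • w⟫ ≤ ⟪x, ‖w‖⁻¹ • w⟫ := by
        intro a ha
        rw [real_inner_smul_right, real_inner_smul_right, hw', hw']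
        exact mul_le_mul_of_nonneg_left (hfK a ha) (by positivity)
      exact (IsGreatest.csSup_eq ⟨mem_image_of_mem _ (hxK u), by
        rintro _ ⟨a, ha, rfl⟩
        exact hub a ha⟩).symm
    · -- the lower bound on ⟪u, v⟫
      have hub : ∀ a ∈ K, ⟪a, ‖w‖⁻¹ • w⟫ ≤ ⟪x, ‖w‖⁻¹ • w⟫ := by
        intro a ha
        rw [real_inner_smul_right, real_inner_smul_right, hw', hw']
        exact mul_le_mul_of_nonneg_left (hfK a ha) (by positivity)
      set v : Esp n := ‖w‖⁻¹ • w with hvdef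
      have hvnorm : ‖v‖ = 1 := by
        rw [hvdef, norm_smul, Real.norm_eq_abs, abs_of_pos (by positivity),
          inv_mul_cancel₀ hnw.ne']
      have hvK : r₀ • v ∈ K := hr₀K _ (by
        rw [norm_smul, hvnorm, mul_one, Real.norm_eq_abs, abs_of_pos hr₀])
      have h1 : r₀ ≤ ⟪x, v⟫ := by
        have := hub _ hvK
        rwa [real_inner_smul_left, real_inner_self_eq_norm_sq, hvnorm, one_pow,
          mul_one] at this
      have h2 : ⟪x, v⟫ = radialFn K u * ⟪(u : Esp n), v⟫ := by
        rw [hxdef, real_inner_smul_left]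
      have h3 : r₀ / radialFn K u ≤ ⟪(u : Esp n), v⟫ := by
        rw [div_le_iff₀ (hrad_pos u)]
        calc r₀ ≤ ⟪x, v⟫ := h1
          _ = ⟪(u : Esp n), v⟫ * radialFn K u := by rw [h2]; ring
      calc r₀ / R ≤ r₀ / radialFn K u :=
            div_le_div_of_nonneg_left hr₀.le (hrad_pos u) (hrad_le u)
        _ ≤ ⟪(u : Esp n), v⟫ := h3
  -- the hemisphere and the small cap
  set η : Set (sphere (0 : Esp n) 1) := {v | 0 < ⟪ξ, (v : Esp n)⟫} with hηdef
  have hηopen : IsOpen η := by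
    have : Continuous fun v : sphere (0 : Esp n) 1 => ⟪ξ, (v : Esp n)⟫ :=
      Continuous.inner continuous_const continuous_subtype_val
    exact isOpen_lt continuous_const this
  set δ : ℝ := r₀ / R with hδdef
  have hδ : 0 < δ := div_pos hr₀ hR
  set B : Set (sphere (0 : Esp n) 1) := (Subtype.val) ⁻¹' (ball ξ δ) with hBdef
  have hBopen : IsOpen B := isOpen_ball.preimage continuous_subtype_val
  have hBmeas : MeasurableSet B := hBopen.measurableSet
  have hBsub : B ⊆ revGauss K η := by
    intro u hu
    obtain ⟨v, hveq, hvlow⟩ := hsupp u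
    refine ⟨v, ?_, hveq⟩
    have hd : ‖(u : Esp n) - ξ‖ < δ := by
      have h' : (u : Esp n) ∈ ball ξ δ := hu
      rwa [mem_ball, dist_eq_norm] at h'
    have habs : |⟪(u : Esp n) - ξ, (v : Esp n)⟫| ≤ ‖(u : Esp n) - ξ‖ * ‖(v : Esp n)‖ :=
      abs_real_inner_le_norm _ _
    rw [hnorm v, mul_one] at habs
    have hsub : ⟪(u : Esp n) - ξ, (v : Esp n)⟫ = ⟪(u : Esp n), (v : Esp n)⟫ - ⟪ξ, (v : Esp n)⟫ :=
      inner_sub_left _ _ _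
    have := abs_le.1 habs
    show 0 < ⟪ξ, (v : Esp n)⟫
    have h1 : ⟪(u : Esp n), (v : Esp n)⟫ - ⟪ξ, (v : Esp n)⟫ ≤ ‖(u : Esp n) - ξ‖ := by
      rw [← hsub]; exact this.2
    linarith
  -- the cap has positive spherical measure
  have hBpos : 0 < sphMeasure n B := by
    have haux := Measure.toSphere_apply_aux (volume : Measure (Esp n)) B ⟨1, mem_Ioi.2 one_pos⟩
    have h1 : ((⟨1, mem_Ioi.2 one_pos⟩ : Ioi (0 : ℝ)) : ℝ) = 1 := rfl
    rw [h1] at haux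
    rw [sphMeasure, Measure.toSphere_apply' _ hBmeas, finrank_euclideanSpace_fin, ← haux]
    set T : Set (Esp n) :=
      Subtype.val '' (⇑(homeomorphUnitSphereProd (Esp n)) ⁻¹' B ×ˢ Iio ⟨1, mem_Ioi.2 one_pos⟩) with hTdef
    have hIio : IsOpen (Iio (⟨1, mem_Ioi.2 one_pos⟩ : Ioi (0 : ℝ))) := by
      have : Iio (⟨1, mem_Ioi.2 one_pos⟩ : Ioi (0 : ℝ)) = Subtype.val ⁻¹' Iio 1 := by
        ext x
        exact Iff.rfl
      rw [this]
      exact isOpen_Iio.preimage continuous_subtype_val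
    have hTopen : IsOpen T :=
      (isOpen_compl_singleton).isOpenMap_subtype_val _
        ((homeomorphUnitSphereProd (Esp n)).continuous.isOpen_preimage _ (hBopen.prod hIio))
    have hTne : T.Nonempty := by
      have hz0 : ((2 : ℝ)⁻¹ • ξ : Esp n) ≠ 0 := by
        intro h
        have : ‖(2 : ℝ)⁻¹ • ξ‖ = 0 := by rw [h, norm_zero]
        rw [norm_smul, hξ, mul_one, Real.norm_eq_abs] at this
        norm_num at this
      set z : ({0}ᶜ : Set (Esp n)) := ⟨(2 : ℝ)⁻¹ • ξ, hz0⟩ with hzdef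
      refine ⟨(2 : ℝ)⁻¹ • ξ, z, ?_, rfl⟩
      rw [mem_preimage, Set.mem_prod]
      constructor
      · show ((homeomorphUnitSphereProd (Esp n) z).1 : Esp n) ∈ ball ξ δ
        rw [homeomorphUnitSphereProd_apply_fst_coe]
        have hzn : ‖(z : Esp n)‖ = 2⁻¹ := by
          show ‖(2 : ℝ)⁻¹ • ξ‖ = 2⁻¹
          rw [norm_smul, hξ, mul_one, Real.norm_eq_abs]
          norm_num
        rw [hzn]
        have : ((2 : ℝ)⁻¹)⁻¹ • ((2 : ℝ)⁻¹ • ξ) = ξ := by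
          rw [smul_smul]
          norm_num
        show (((2:ℝ)⁻¹)⁻¹ • (z : Esp n)) ∈ ball ξ δ
        rw [show (z : Esp n) = (2 : ℝ)⁻¹ • ξ from rfl, this]
        exact mem_ball_self hδ
      · show (homeomorphUnitSphereProd (Esp n) z).2 ∈ Iio ⟨1, mem_Ioi.2 one_pos⟩
        rw [mem_Iio, ← Subtype.coe_lt_coe, homeomorphUnitSphereProd_apply_snd_coe]
        show ‖(z : Esp n)‖ < 1
        rw [show (z : Esp n) = (2 : ℝ)⁻¹ • ξ from rfl, norm_smul, hξ, mul_one, Real.norm_eq_abs,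
          abs_of_pos (by norm_num : (0:ℝ) < 2⁻¹)]
        norm_num
    refine ENNReal.mul_pos ?_ (hTopen.measure_pos volume hTne).ne'
    exact_mod_cast Nat.cast_ne_zero.2 hn.ne'
  -- bounds for φ on the annulus
  set A : Set (Esp n) := closedBall (0 : Esp n) R \ ball (0 : Esp n) r₀ with hAdef
  have hAcomp : IsCompact A := (isCompact_closedBall _ _).diff isOpen_ball
  have hA0 : A ⊆ ({(0 : Esp n)}ᶜ : Set (Esp n)) := by
    intro y hy h0
    rw [mem_singleton_iff] at h0
    exact hy.2 (by rw [h0, mem_ball_zero_iff, norm_zero]; exact hr₀)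
  have hAne : A.Nonempty := by
    refine ⟨R • ξ, ?_, ?_⟩
    · rw [mem_closedBall_zero_iff, norm_smul, hξ, mul_one, Real.norm_eq_abs, abs_of_pos hR]
    · rw [mem_ball_zero_iff, norm_smul, hξ, mul_one, Real.norm_eq_abs, abs_of_pos hR]
      exact not_lt.2 hr₀R
  have hφA : ContinuousOn φ A := hφc.mono hA0
  obtain ⟨a, haA, hamin⟩ := hAcomp.exists_isMinOn hAne hφA
  obtain ⟨b, hbA, hbmax⟩ := hAcomp.exists_isMaxOn hAne hφA
  have hapos : 0 < φ a := hφp a (fun h => hA0 haA (by rw [h]; rfl))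
  have hxA : ∀ u : sphere (0 : Esp n) 1, radialFn K u • (u : Esp n) ∈ A := by
    intro u
    constructor
    · rw [mem_closedBall_zero_iff, norm_smul, hnorm u, mul_one, Real.norm_eq_abs,
        abs_of_pos (hrad_pos u)]
      exact hrad_le u
    · rw [mem_ball_zero_iff, norm_smul, hnorm u, mul_one, Real.norm_eq_abs,
        abs_of_pos (hrad_pos u)]
      exact not_lt.2 (hrad_ge u)
  set c : ℝ≥0∞ := ENNReal.ofReal (φ a * r₀ ^ n) with hcdef
  have hcpos : 0 < c := ENNReal.ofReal_pos.2 (by positivity)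
  have hflow : ∀ u : sphere (0 : Esp n) 1,
      c ≤ ENNReal.ofReal (φ (radialFn K u • (u : Esp n)) * radialFn K u ^ n) := by
    intro u
    apply ENNReal.ofReal_le_ofReal
    have h1 : φ a ≤ φ (radialFn K u • (u : Esp n)) := hamin (hxA u)
    have h2 : r₀ ^ n ≤ radialFn K u ^ n := pow_le_pow_left₀ hr₀.le (hrad_ge u) n
    have h3 : 0 < φ (radialFn K u • (u : Esp n)) :=
      hφp _ (fun h => hA0 (hxA u) (by rw [h]; rfl))
    exact mul_le_mul h1 h2 (by positivity) h3.le
  have hfupp : ∀ u : sphere (0 : Esp n) 1,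
      ENNReal.ofReal (φ (radialFn K u • (u : Esp n)) * radialFn K u ^ n)
        ≤ ENNReal.ofReal (φ b * R ^ n) := by
    intro u
    apply ENNReal.ofReal_le_ofReal
    have h1 : φ (radialFn K u • (u : Esp n)) ≤ φ b := hbmax (hxA u)
    have h2 : radialFn K u ^ n ≤ R ^ n := pow_le_pow_left₀ (hrad_pos u).le (hrad_le u) n
    have h3 : 0 < φ (radialFn K u • (u : Esp n)) :=
      hφp _ (fun h => hA0 (hxA u) (by rw [h]; rfl))
    exact mul_le_mul h1 h2 (pow_nonneg (hrad_pos u).le n) (le_trans h3.le h1)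
  -- the measure C is finite
  have hsphfin : IsFiniteMeasure (sphMeasure n) := by
    unfold sphMeasure
    infer_instance
  have hCfin : IsFiniteMeasure C := by
    constructor
    rw [hC univ MeasurableSet.univ, dualCurv]
    calc ∫⁻ u in revGauss K univ,
          ENNReal.ofReal (φ (radialFn K u • (u : Esp n)) * radialFn K u ^ n) ∂(sphMeasure n)
        ≤ ∫⁻ u, ENNReal.ofReal (φ (radialFn K u • (u : Esp n)) * radialFn K u ^ n)
            ∂(sphMeasure n) := setLIntegral_le_lintegral _ _
      _ ≤ ∫⁻ _, ENNReal.ofReal (φ b * R ^ n) ∂(sphMeasure n) := lintegral_mono fun u => hfupp u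
      _ = ENNReal.ofReal (φ b * R ^ n) * sphMeasure n univ := lintegral_const _
      _ < ⊤ := ENNReal.mul_lt_top ENNReal.ofReal_lt_top (measure_lt_top _ _)
  -- C gives positive mass to the open hemisphere
  have hηmeas : MeasurableSet η := hηopen.measurableSet
  have hCη : 0 < C η := by
    rw [hC η hηmeas, dualCurv]
    calc (0 : ℝ≥0∞) < c * sphMeasure n B := ENNReal.mul_pos hcpos.ne' hBpos.ne'
      _ = ∫⁻ _ in B, c ∂(sphMeasure n) := (setLIntegral_const _ _).symm
      _ ≤ ∫⁻ u in B, ENNReal.ofReal (φ (radialFn K u • (u : Esp n)) * radialFn K u ^ n)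
            ∂(sphMeasure n) := setLIntegral_mono' hBmeas fun u _ => hflow u
      _ ≤ ∫⁻ u in revGauss K η,
            ENNReal.ofReal (φ (radialFn K u • (u : Esp n)) * radialFn K u ^ n) ∂(sphMeasure n) :=
          lintegral_mono' (Measure.restrict_mono hBsub le_rfl) le_rfl
  -- integrability of the integrand
  have hgcont : Continuous fun v : sphere (0 : Esp n) 1 => max ⟪ξ, (v : Esp n)⟫ 0 :=
    (Continuous.inner continuous_const continuous_subtype_val).max continuous_const
  have hgint : Integrable (fun v : sphere (0 : Esp n) 1 => max ⟪ξ, (v : Esp n)⟫ 0) C := by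
    refine Integrable.mono' (integrable_const 1) hgcont.aestronglyMeasurable
      (ae_of_all _ fun v => ?_)
    rw [Real.norm_eq_abs, abs_of_nonneg (le_max_right _ _)]
    refine max_le ?_ zero_le_one
    calc ⟪ξ, (v : Esp n)⟫ ≤ ‖ξ‖ * ‖(v : Esp n)‖ := real_inner_le_norm _ _
      _ = 1 := by rw [hξ, hnorm v, mul_one]
  -- conclude
  have hsup : (Function.support fun v : sphere (0 : Esp n) 1 => max ⟪ξ, (v : Esp n)⟫ 0) = η := by
    ext v
    constructor
    · intro h
      by_contra hle
      rw [hηdef, mem_setOf_eq, not_lt] at hle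
      exact h (max_eq_right hle)
    · intro h
      exact (lt_max_iff.2 (Or.inl h)).ne'
  have h0 : (0 : (sphere (0 : Esp n) 1) → ℝ) ≤
      fun v : sphere (0 : Esp n) 1 => max ⟪ξ, (v : Esp n)⟫ 0 :=
    fun v => le_max_right _ _
  exact (integral_pos_iff_support_of_nonneg h0 hgint).2 (hsup ▸ hCη)
end
end

section
/- Let μ be a nonzero finite Borel measure on S^{n-1} and suppose for some convex body K containing the origin in its interior and some constant c > 0 we have μ = c · C̃_{φ,𝒱}(K,·), where φ : ℝⁿ \ {0} → (0,∞) is continuous with finite Φ(t,u). Then μ is not concentrated on any closed hemisphere: ∫_{S^{n-1}} ⟨ξ, θ⟩₊ dμ(θ) > 0 for all ξ ∈ S^{n-1}. -/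
open MeasureTheory Metric Set Filter
open scoped ENNReal NNReal Topology Pointwise RealInnerProductSpace

noncomputable section

section Aux

variable {n : ℕ}
local notation "E" => EuclideanSpace ℝ (Fin n)

lemma aux_radial {K : Set (EuclideanSpace ℝ (Fin n))} (hKcl : IsClosed K)
    {r R : ℝ} (hr0 : 0 < r) (hrK : closedBall (0 : E) r ⊆ K) (hKR : K ⊆ closedBall (0:E) R)
    (u : sphere (0 : E) 1) :
    r ≤ radialFn K u ∧ radialFn K u ≤ R ∧ radialFn K u • (u:E) ∈ K ∧
      radialFn K u • (u:E) ∉ interior K := by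
  have hu : ‖(u:E)‖ = 1 := mem_sphere_zero_iff_norm.mp u.2
  have hnorm : ∀ s : ℝ, 0 ≤ s → ‖s • (u:E)‖ = s := by
    intro s hs; rw [norm_smul, hu, Real.norm_eq_abs, abs_of_nonneg hs, mul_one]
  set S := {s : ℝ | 0 < s ∧ s • (u:E) ∈ K} with hS
  have hrS : r ∈ S := ⟨hr0, hrK (by simp [mem_closedBall, dist_zero_right, hnorm r hr0.le])⟩
  have hbdd : BddAbove S := by
    refine ⟨R, fun s hs => ?_⟩
    have := hKR hs.2
    rw [mem_closedBall, dist_zero_right, hnorm s hs.1.le] at this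
    exact this
  have hge : r ≤ radialFn K u := le_csSup hbdd hrS
  have hle : radialFn K u ≤ R := csSup_le ⟨r, hrS⟩ fun s hs => by
    have := hKR hs.2
    rwa [mem_closedBall, dist_zero_right, hnorm s hs.1.le] at this
  have hmem : radialFn K u • (u:E) ∈ K := by
    have h1 : sSup S ∈ closure S := csSup_mem_closure ⟨r, hrS⟩ hbdd
    have h2 : closure S ⊆ {s : ℝ | s • (u:E) ∈ K} := by
      refine closure_minimal (fun s hs => hs.2) ?_
      exact hKcl.preimage (by continuity)
    exact h2 h1
  refine ⟨hge, hle, hmem, fun hint => ?_⟩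
  obtain ⟨ε, hε, hball⟩ := Metric.isOpen_iff.mp isOpen_interior _ hint
  have hρpos : 0 < radialFn K u := lt_of_lt_of_le hr0 hge
  have : radialFn K u + ε/2 ∈ S := by
    constructor
    · positivity
    · apply interior_subset; apply hball
      rw [mem_ball, dist_eq_norm, ← sub_smul, hnorm _ (by linarith)]
      linarith
  have := le_csSup hbdd this
  have : radialFn K u + ε/2 ≤ radialFn K u := this
  linarith

lemma aux_supp {K : Set (EuclideanSpace ℝ (Fin n))} (hKconv : Convex ℝ K)
    (hK0 : (0:E) ∈ interior K) {x : E} (hx : x ∈ K) (hxi : x ∉ interior K) :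
    ∃ v : E, ‖v‖ = 1 ∧ (∀ y ∈ K, ⟪y, v⟫ ≤ ⟪x, v⟫) ∧ ⟪x, v⟫ = suppFn K v := by
  obtain ⟨f, hf⟩ := geometric_hahn_banach_open_point (hKconv.interior) isOpen_interior hxi
  have hfx : 0 < f x := by simpa using hf 0 hK0
  have hfK : ∀ y ∈ K, f y ≤ f x := by
    intro y hy
    by_contra h
    push_neg at h
    have hfy : 0 < f y := lt_trans hfx h
    set t : ℝ := (1 - f x / f y) / 2 with ht
    have h01 : 0 < f x / f y := div_pos hfx hfy
    have h11 : f x / f y < 1 := (div_lt_one hfy).mpr h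
    have ht0 : 0 < t := by rw [ht]; linarith
    have ht1 : t + (1 - t) = 1 := by ring
    have hmem : t • (0:E) + (1 - t) • y ∈ interior K :=
      hKconv.combo_interior_self_mem_interior hK0 hy ht0 (by linarith) ht1
    have := hf _ hmem
    rw [smul_zero, zero_add, f.map_smul, smul_eq_mul] at this
    have h2 : (1 - t) * f y = (1 + f x / f y)/2 * f y := by rw [ht]; ring
    rw [h2] at this
    have h3 : (1 + f x / f y)/2 * f y = (f y + f x)/2 := by
      field_simp
    rw [h3] at this
    linarith
  set w : E := (InnerProductSpace.toDual ℝ (EuclideanSpace ℝ (Fin n))).symm f with hw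
  have hwf : ∀ z : E, ⟪w, z⟫ = f z := fun z => InnerProductSpace.toDual_symm_apply
  have hwf' : ∀ z : E, ⟪z, w⟫ = f z := fun z => by rw [real_inner_comm]; exact hwf z
  have hw0 : w ≠ 0 := by
    intro h
    have := hwf x
    rw [h, inner_zero_left] at this
    exact absurd this.symm (ne_of_gt hfx)
  refine ⟨‖w‖⁻¹ • w, by simp [norm_smul, inv_mul_cancel₀ (norm_ne_zero_iff.mpr hw0)], ?_, ?_⟩
  · intro y hy
    rw [real_inner_smul_right, real_inner_smul_right, hwf', hwf']
    exact mul_le_mul_of_nonneg_left (hfK y hy) (by positivity)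
  · have hig : IsGreatest ((fun y => (⟪y, ‖w‖⁻¹ • w⟫:ℝ)) '' K) ⟪x, ‖w‖⁻¹ • w⟫ := by
      constructor
      · exact mem_image_of_mem _ hx
      · rintro a ⟨y, hy, rfl⟩
        show (⟪y, _⟫:ℝ) ≤ ⟪x, _⟫
        rw [real_inner_smul_right, real_inner_smul_right, hwf', hwf']
        exact mul_le_mul_of_nonneg_left (hfK y hy) (by positivity)
    exact (hig.csSup_eq).symm

lemma aux_cap (hn : 0 < n) {ξ : E} (hξ : ‖ξ‖ = 1) {δ : ℝ} (hδ : 0 < δ) :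
    0 < sphMeasure n ((fun u : sphere (0:E) 1 => (u : E)) ⁻¹' (ball ξ δ)) := by
  set s : Set (sphere (0:E) 1) := (fun u : sphere (0:E) 1 => (u : E)) ⁻¹' (ball ξ δ) with hs
  have hms : MeasurableSet s := (isOpen_ball.preimage continuous_subtype_val).measurableSet
  rw [sphMeasure, Measure.toSphere_apply' _ hms]
  set ε : ℝ := min (1/8) (δ/16) with hε
  have hε0 : 0 < ε := by positivity
  have hball : ball ((2⁻¹:ℝ) • ξ) ε ⊆ Ioo (0:ℝ) 1 • ((fun u : sphere (0:E) 1 => (u : E)) '' s) := by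
    intro y hy
    rw [mem_ball, dist_eq_norm] at hy
    have hε8 : ε ≤ 1/8 := min_le_left _ _
    have hεδ : ε ≤ δ/16 := min_le_right _ _
    have habs : |‖y‖ - 2⁻¹| < ε := by
      have h1 : ‖(2⁻¹:ℝ) • ξ‖ = 2⁻¹ := by
        rw [norm_smul, hξ, mul_one]; norm_num
      calc |‖y‖ - 2⁻¹| = |‖y‖ - ‖(2⁻¹:ℝ) • ξ‖| := by rw [h1]
        _ ≤ ‖y - (2⁻¹:ℝ) • ξ‖ := abs_norm_sub_norm_le _ _
        _ < ε := hy
    have habs' := abs_lt.mp habs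
    have hylb : 3/8 < ‖y‖ := by linarith
    have hyub : ‖y‖ < 5/8 := by linarith
    have hy0 : y ≠ 0 := by
      intro h; rw [h, norm_zero] at hylb; linarith
    set z : E := ‖y‖⁻¹ • y with hz
    have hzn : ‖z‖ = 1 := by
      rw [hz, norm_smul, norm_inv, norm_norm, inv_mul_cancel₀ (by positivity)]
    have hzξ : ‖z - ξ‖ < δ := by
      have h2 : z - ξ = ‖y‖⁻¹ • (y - ‖y‖ • ξ) := by
        rw [smul_sub, smul_smul, inv_mul_cancel₀ (by positivity : ‖y‖ ≠ 0), one_smul]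
      have h3 : ‖y - ‖y‖ • ξ‖ ≤ ‖y - (2⁻¹:ℝ) • ξ‖ + ‖((2⁻¹:ℝ) - ‖y‖) • ξ‖ := by
        have : y - ‖y‖ • ξ = (y - (2⁻¹:ℝ) • ξ) + ((2⁻¹:ℝ) - ‖y‖) • ξ := by
          rw [sub_smul]; abel
        rw [this]; exact norm_add_le _ _
      have h4 : ‖((2⁻¹:ℝ) - ‖y‖) • ξ‖ < ε := by
        rw [norm_smul, hξ, mul_one, Real.norm_eq_abs, abs_sub_comm]
        exact habs
      have h5 : ‖y - ‖y‖ • ξ‖ < 2 * ε := by linarith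
      have h6 : ‖y‖⁻¹ < 8/3 := by
        rw [inv_lt_comm₀ (by linarith) (by norm_num)]
        linarith
      calc ‖z - ξ‖ = ‖y‖⁻¹ * ‖y - ‖y‖ • ξ‖ := by
            rw [h2, norm_smul, norm_inv, norm_norm]
        _ ≤ (8/3) * (2*ε) := by
            apply mul_le_mul h6.le h5.le (norm_nonneg _) (by norm_num)
        _ < δ := by
            have : (8/3 : ℝ) * (2*ε) ≤ (8/3) * (2 * (δ/16)) := by nlinarith
            nlinarith
    have hzs : z ∈ (fun u : sphere (0:E) 1 => (u : E)) '' s := by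
      refine ⟨⟨z, mem_sphere_zero_iff_norm.mpr hzn⟩, ?_, rfl⟩
      simp only [hs, mem_preimage, mem_ball, dist_eq_norm]
      exact hzξ
    have : y = ‖y‖ • z := by
      rw [hz, smul_smul, mul_inv_cancel₀ (by positivity : ‖y‖ ≠ 0), one_smul]
    rw [this]
    exact Set.smul_mem_smul ⟨by linarith, by linarith⟩ hzs
  apply ENNReal.mul_pos
  · simp only [ne_eq, Nat.cast_eq_zero]
    rw [finrank_euclideanSpace, Fintype.card_fin]
    omega
  · have := (measure_ball_pos volume ((2⁻¹:ℝ) • ξ) hε0).trans_le (measure_mono hball)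
    exact this.ne'

end Aux

/-- necessity in the general dual Orlicz-Minkowski problem: a measure that is
(a positive multiple of) a general dual Orlicz curvature measure is not concentrated on any
closed hemisphere. -/
theorem stmt18 {n : ℕ} (hn : 0 < n) (φ : EuclideanSpace ℝ (Fin n) → ℝ)
    (hφc : ContinuousOn φ {(0 : EuclideanSpace ℝ (Fin n))}ᶜ)
    (hφp : ∀ x : EuclideanSpace ℝ (Fin n), x ≠ 0 → 0 < φ x)
    (hΦi : ∀ t > (0 : ℝ), ∀ u : sphere (0 : EuclideanSpace ℝ (Fin n)) 1,
      IntegrableOn (fun r : ℝ => φ (r • (u : EuclideanSpace ℝ (Fin n))) * r ^ (n - 1)) (Ioi t))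
    (K : Set (EuclideanSpace ℝ (Fin n)))
    (hKconv : Convex ℝ K) (hKcomp : IsCompact K)
    (hK0 : (0 : EuclideanSpace ℝ (Fin n)) ∈ interior K)
    (C : Measure (sphere (0 : EuclideanSpace ℝ (Fin n)) 1))
    (hC : ∀ η : Set (sphere (0 : EuclideanSpace ℝ (Fin n)) 1), MeasurableSet η →
      C η = dualCurv φ K η)
    (μ : Measure (sphere (0 : EuclideanSpace ℝ (Fin n)) 1))
    [IsFiniteMeasure μ] (hμ0 : μ ≠ 0)
    (c : ℝ≥0) (hc : 0 < c) (hμC : μ = c • C) :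
    ∀ ξ : EuclideanSpace ℝ (Fin n), ‖ξ‖ = 1 →
      0 < ∫ θ, max ⟪ξ, (θ : EuclideanSpace ℝ (Fin n))⟫ 0 ∂μ := by
  intro ξ hξ
  -- inner radius
  obtain ⟨r, hr0, hrK⟩ : ∃ r : ℝ, 0 < r ∧ closedBall (0:(EuclideanSpace ℝ (Fin n))) r ⊆ K := by
    obtain ⟨r', hr', hb⟩ := Metric.isOpen_iff.mp isOpen_interior 0 hK0
    exact ⟨r'/2, by linarith, (closedBall_subset_ball (by linarith)).trans
      (hb.trans interior_subset)⟩
  -- outer radius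
  obtain ⟨R, hKR⟩ : ∃ R : ℝ, K ⊆ closedBall (0:(EuclideanSpace ℝ (Fin n))) R :=
    hKcomp.isBounded.subset_closedBall 0
  have hrR : r ≤ R := by
    have h1 : r • ξ ∈ closedBall (0:(EuclideanSpace ℝ (Fin n))) r := by
      simp [mem_closedBall, dist_zero_right, norm_smul, hξ, abs_of_nonneg hr0.le]
    have := hKR (hrK h1)
    rw [mem_closedBall, dist_zero_right, norm_smul, hξ, Real.norm_eq_abs,
      abs_of_nonneg hr0.le, mul_one] at this
    exact this
  have hR0 : 0 < R := lt_of_lt_of_le hr0 hrR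
  have hδ : 0 < r / R := by positivity
  -- the open hemisphere
  set η : Set (sphere (0:(EuclideanSpace ℝ (Fin n))) 1) := {v | 0 < ⟪ξ, (v:(EuclideanSpace ℝ (Fin n)))⟫} with hη
  have hηm : MeasurableSet η := by
    have : IsOpen η := by
      have hcont : Continuous fun v : sphere (0:(EuclideanSpace ℝ (Fin n))) 1 => (⟪ξ, (v:(EuclideanSpace ℝ (Fin n)))⟫ : ℝ) :=
        continuous_const.inner continuous_subtype_val
      exact isOpen_Ioi.preimage hcont
    exact this.measurableSet
  -- the spherical cap
  set s : Set (sphere (0:(EuclideanSpace ℝ (Fin n))) 1) := (fun u : sphere (0:(EuclideanSpace ℝ (Fin n))) 1 => (u:(EuclideanSpace ℝ (Fin n)))) ⁻¹' (ball ξ (r/R)) with hscap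
  -- cap is contained in the reverse Gauss image of the hemisphere
  have hsub : s ⊆ revGauss K η := by
    intro u hu
    obtain ⟨hρr, hρR, hρK, hρi⟩ := aux_radial hKcomp.isClosed hr0 hrK hKR u
    obtain ⟨v, hv1, hvle, hveq⟩ := aux_supp hKconv hK0 hρK hρi
    have hρ0 : 0 < radialFn K u := lt_of_lt_of_le hr0 hρr
    have hrv : r ≤ ⟪radialFn K u • (u:(EuclideanSpace ℝ (Fin n))), v⟫ := by
      have hrvK : r • v ∈ K := by
        apply hrK
        simp [mem_closedBall, dist_zero_right, norm_smul, hv1, abs_of_nonneg hr0.le]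
      have h1 : (⟪r • v, v⟫:ℝ) = r := by
        rw [real_inner_smul_left, real_inner_self_eq_norm_sq, hv1]
        ring
      have := hvle _ hrvK
      linarith [h1 ▸ this]
    have hx : (⟪radialFn K u • (u:(EuclideanSpace ℝ (Fin n))), v⟫:ℝ) = radialFn K u * ⟪(u:(EuclideanSpace ℝ (Fin n))), v⟫ :=
      real_inner_smul_left _ _ _
    have huv0 : 0 < ⟪(u:(EuclideanSpace ℝ (Fin n))), v⟫ := by nlinarith
    have huv : r / R ≤ ⟪(u:(EuclideanSpace ℝ (Fin n))), v⟫ := by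
      rw [div_le_iff₀ hR0]
      nlinarith
    have hξv : 0 < ⟪ξ, v⟫ := by
      have hd : ‖(u:(EuclideanSpace ℝ (Fin n))) - ξ‖ < r / R := by
        have := hu
        simp only [hscap, mem_preimage, mem_ball, dist_eq_norm] at this
        exact this
      have h1 : (⟪ξ, v⟫:ℝ) = ⟪(u:(EuclideanSpace ℝ (Fin n))), v⟫ - ⟪(u:(EuclideanSpace ℝ (Fin n))) - ξ, v⟫ := by
        rw [inner_sub_left]; ring
      have h2 : |(⟪(u:(EuclideanSpace ℝ (Fin n))) - ξ, v⟫:ℝ)| ≤ ‖(u:(EuclideanSpace ℝ (Fin n))) - ξ‖ := by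
        have := abs_real_inner_le_norm ((u:(EuclideanSpace ℝ (Fin n))) - ξ) v
        rwa [hv1, mul_one] at this
      have h3 : (⟪(u:(EuclideanSpace ℝ (Fin n))) - ξ, v⟫:ℝ) < r / R := lt_of_le_of_lt (le_trans (le_abs_self _) h2) hd
      linarith
    exact ⟨⟨v, mem_sphere_zero_iff_norm.mpr hv1⟩, hξv, hveq⟩
  -- lower bound for the integrand via the minimum of φ on an annulus
  set A : Set (EuclideanSpace ℝ (Fin n)) := closedBall (0:(EuclideanSpace ℝ (Fin n))) R \ ball (0:(EuclideanSpace ℝ (Fin n))) r with hA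
  have hAcomp : IsCompact A := (isCompact_closedBall _ _).diff isOpen_ball
  have hAne : A.Nonempty := by
    refine ⟨r • ξ, ?_, ?_⟩
    · rw [mem_closedBall, dist_zero_right, norm_smul, hξ, Real.norm_eq_abs,
        abs_of_nonneg hr0.le, mul_one]
      exact hrR
    · rw [mem_ball, dist_zero_right, norm_smul, hξ, Real.norm_eq_abs,
        abs_of_nonneg hr0.le, mul_one]
      exact lt_irrefl r
  have hAsub : A ⊆ {(0:(EuclideanSpace ℝ (Fin n)))}ᶜ := by
    intro x hx
    simp only [mem_compl_iff, mem_singleton_iff]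
    intro h
    have := hx.2
    rw [h] at this
    exact this (by simp [hr0])
  obtain ⟨x₀, hx₀A, hmin⟩ := hAcomp.exists_isMinOn hAne (hφc.mono hAsub)
  have hm₀ : 0 < φ x₀ := hφp x₀ (fun h => hAsub hx₀A (h ▸ rfl))
  have hbound : ∀ u : sphere (0:(EuclideanSpace ℝ (Fin n))) 1,
      φ x₀ * r ^ n ≤ φ (radialFn K u • (u:(EuclideanSpace ℝ (Fin n)))) * radialFn K u ^ n := by
    intro u
    obtain ⟨hρr, hρR, hρK, hρi⟩ := aux_radial hKcomp.isClosed hr0 hrK hKR u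
    have hρ0 : 0 < radialFn K u := lt_of_lt_of_le hr0 hρr
    have hu : ‖(u:(EuclideanSpace ℝ (Fin n)))‖ = 1 := mem_sphere_zero_iff_norm.mp u.2
    have hnorm : ‖radialFn K u • (u:(EuclideanSpace ℝ (Fin n)))‖ = radialFn K u := by
      rw [norm_smul, hu, Real.norm_eq_abs, abs_of_nonneg hρ0.le, mul_one]
    have hmemA : radialFn K u • (u:(EuclideanSpace ℝ (Fin n))) ∈ A := by
      constructor
      · rw [mem_closedBall, dist_zero_right, hnorm]; exact hρR
      · rw [mem_ball, dist_zero_right, hnorm]; exact not_lt.mpr hρr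
    have h1 : φ x₀ ≤ φ (radialFn K u • (u:(EuclideanSpace ℝ (Fin n)))) := hmin hmemA
    have h2 : r ^ n ≤ radialFn K u ^ n := pow_le_pow_left₀ hr0.le hρr n
    have h3 : (0:ℝ) < r ^ n := pow_pos hr0 n
    nlinarith
  -- positivity of the curvature measure of the hemisphere
  have hcap : 0 < sphMeasure n s := aux_cap hn hξ hδ
  have hdc : 0 < dualCurv φ K η := by
    have h1 : ENNReal.ofReal (φ x₀ * r ^ n) * sphMeasure n s ≤ dualCurv φ K η := by
      rw [dualCurv]
      calc ENNReal.ofReal (φ x₀ * r ^ n) * sphMeasure n s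
          = ∫⁻ _ in s, ENNReal.ofReal (φ x₀ * r ^ n) ∂(sphMeasure n) :=
            (setLIntegral_const s _).symm
        _ ≤ ∫⁻ u in s,
              ENNReal.ofReal (φ (radialFn K u • (u:(EuclideanSpace ℝ (Fin n)))) * radialFn K u ^ n) ∂(sphMeasure n) :=
            lintegral_mono fun u => ENNReal.ofReal_le_ofReal (hbound u)
        _ ≤ ∫⁻ u in revGauss K η,
              ENNReal.ofReal (φ (radialFn K u • (u:(EuclideanSpace ℝ (Fin n)))) * radialFn K u ^ n) ∂(sphMeasure n) :=
            lintegral_mono' (Measure.restrict_mono hsub le_rfl) le_rfl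
    refine lt_of_lt_of_le ?_ h1
    apply ENNReal.mul_pos
    · simp only [ne_eq, ENNReal.ofReal_eq_zero, not_le]
      positivity
    · exact hcap.ne'
  -- positivity of μ on the hemisphere
  have hμη : 0 < μ η := by
    rw [hμC, Measure.smul_apply, hC η hηm, ENNReal.smul_def, smul_eq_mul]
    apply ENNReal.mul_pos
    · exact_mod_cast hc.ne'
    · exact hdc.ne'
  -- conclude via the support of the integrand
  have hcont : Continuous fun θ : sphere (0:(EuclideanSpace ℝ (Fin n))) 1 => max (⟪ξ, (θ:(EuclideanSpace ℝ (Fin n)))⟫:ℝ) 0 :=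
    (continuous_const.inner continuous_subtype_val).max continuous_const
  have hint : Integrable (fun θ : sphere (0:(EuclideanSpace ℝ (Fin n))) 1 => max (⟪ξ, (θ:(EuclideanSpace ℝ (Fin n)))⟫:ℝ) 0) μ :=
    hcont.integrable_of_hasCompactSupport (HasCompactSupport.of_compactSpace _)
  have hsupp : Function.support (fun θ : sphere (0:(EuclideanSpace ℝ (Fin n))) 1 => max (⟪ξ, (θ:(EuclideanSpace ℝ (Fin n)))⟫:ℝ) 0) = η := by
    ext θ
    simp only [Function.mem_support, hη, mem_setOf_eq]
    constructor
    · intro h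
      rcases lt_or_ge 0 (⟪ξ, (θ:(EuclideanSpace ℝ (Fin n)))⟫:ℝ) with h' | h'
      · exact h'
      · exact absurd (max_eq_right h') h
    · intro h
      rw [max_eq_left h.le]
      exact h.ne'
  exact (integral_pos_iff_support_of_nonneg (fun θ => le_max_right _ _) hint).mpr
    (hsupp ▸ hμη)
end
end
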